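/- arXiv:1905.01616 — 9 statements merged into one kernel-verified Lean document; each statement's English description precedes it below -/
import Mathlib

section
/- Let 0 < c < 1/3, K = (1-c^2)/c^2, ψ = arcsin(√(1-c^2))/√K, 0 < r ≤ π/(4√K) - ψ/2, Δ = √K(2r+ψ). If α > 1+2r satisfies cos Δ ≥ (c+1)/log(α/(1+2r)), then sin(Δ)/√K + (α-1-2r)·cos Δ + ((c+1)/(2·log(α/(1+2r))))·(α·log(α/(1+2r)) - α + 1 + 2r) > c·α. -/
open Real

/-!
With `T = (c+1)/(2 log(α/(1+2r)))` the last summand equals `(c+1)α/2 - T(α-1-2r)`, and the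
hypothesis says `cos Δ ≥ 2T`. Hence the left side is at least `sin Δ/√K + (c+1)α/2 + T(α-1-2r)`,
which exceeds `cα` because `sin Δ ≥ 0` (as `0 ≤ Δ ≤ π/2`), `c ≤ 1` and `T(α-1-2r) > 0`.
-/

lemma mul_lt_add_mul_add_mul_of_div_le {a b c L s C : ℝ} (hb : 0 ≤ b) (hba : b < a)
    (hc : -1 < c) (hc' : c ≤ 1) (hL : 0 < L) (hs : 0 ≤ s) (hC : (c + 1) / L ≤ C) :
    c * a < s + (a - b) * C + (c + 1) / (2 * L) * (a * L - a + b) := by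
  set T := (c + 1) / (2 * L) with hT
  have hT_pos : 0 < T := div_pos (by linarith) (by positivity)
  have hC' : 2 * T ≤ C := by rwa [hT, ← mul_div_assoc, mul_div_mul_left _ _ two_ne_zero]
  have h_summand : T * (a * L - a + b) = (c + 1) * a / 2 - T * (a - b) := by
    rw [hT]; field_simp; ring
  have h_gap : 0 < T * (a - b) := mul_pos hT_pos (by linarith)
  calc c * a ≤ (c + 1) * a / 2 := by nlinarith
    _ < s + (a - b) * (2 * T) + ((c + 1) * a / 2 - T * (a - b)) := by linarith
    _ ≤ s + (a - b) * C + T * (a * L - a + b) := by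
      rw [h_summand]; gcongr

theorem statement_1_general (c K ψ r Δ α : ℝ)
    (hc : 0 < c) (hc' : c < 1/3)
    (hψ : ψ = Real.arcsin (Real.sqrt (1 - c^2)) / Real.sqrt K)
    (hr : 0 < r) (hr' : r ≤ π / (4 * Real.sqrt K) - ψ / 2)
    (hΔ : Δ = Real.sqrt K * (2*r + ψ))
    (hα : α > 1 + 2*r)
    (hcos : Real.cos Δ ≥ (c + 1) / Real.log (α / (1 + 2*r))) :
    Real.sin Δ / Real.sqrt K + (α - 1 - 2*r) * Real.cos Δ
      + ((c + 1) / (2 * Real.log (α / (1 + 2*r))))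
        * (α * Real.log (α / (1 + 2*r)) - α + 1 + 2*r)
      > c * α := by
  have hb : 0 < 1 + 2 * r := by linarith
  have hL : 0 < Real.log (α / (1 + 2 * r)) := Real.log_pos ((one_lt_div hb).mpr hα)
  have hψ_nonneg : 0 ≤ ψ := hψ ▸ div_nonneg (arcsin_nonneg.mpr (sqrt_nonneg _)) (sqrt_nonneg _)
  have hΔ_nonneg : 0 ≤ Δ := hΔ ▸ mul_nonneg (sqrt_nonneg _) (by linarith)
  have hΔ_le : Δ ≤ π / 2 := by
    have h : 2 * r + ψ ≤ π / 2 / Real.sqrt K := by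
      rw [div_div]; linarith [show π / (4 * √K) * 2 = π / (2 * √K) by ring_nf]
    rw [hΔ, mul_comm]
    exact mul_le_of_le_div₀ (by positivity) (sqrt_nonneg _) h
  have hsin : 0 ≤ Real.sin Δ / Real.sqrt K :=
    div_nonneg (sin_nonneg_of_nonneg_of_le_pi hΔ_nonneg (by linarith [pi_pos])) (sqrt_nonneg _)
  have key := mul_lt_add_mul_add_mul_of_div_le hb.le hα (by linarith) (by linarith) hL hsin hcos
  linarith

/-- with the constants of the construction, if `α > 1+2r` satisfies
`cos Δ ≥ (c+1)/log(α/(1+2r))`, then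
`sin(Δ)/√K + (α-1-2r)cos Δ + ((c+1)/(2 log(α/(1+2r))))·(α log(α/(1+2r)) - α + 1 + 2r) > cα`. -/
theorem statement_1 (c K ψ r Δ α : ℝ)
    (hc : 0 < c) (hc' : c < 1/3)
    (hK : K = (1 - c^2) / c^2)
    (hψ : ψ = Real.arcsin (Real.sqrt (1 - c^2)) / Real.sqrt K)
    (hr : 0 < r) (hr' : r ≤ π / (4 * Real.sqrt K) - ψ / 2)
    (hΔ : Δ = Real.sqrt K * (2*r + ψ))
    (hα : α > 1 + 2*r)
    (hcos : Real.cos Δ ≥ (c + 1) / Real.log (α / (1 + 2*r))) :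
    Real.sin Δ / Real.sqrt K + (α - 1 - 2*r) * Real.cos Δ
      + ((c + 1) / (2 * Real.log (α / (1 + 2*r))))
        * (α * Real.log (α / (1 + 2*r)) - α + 1 + 2*r)
      > c * α :=
  statement_1_general c K ψ r Δ α hc hc' hψ hr hr' hΔ hα hcos
end

section
/- Let 0 < c < 1/3, K = (1-c^2)/c^2, ψ = arcsin(√(1-c^2))/√K, 0 < r ≤ π/(4√K) - ψ/2, Δ = √K(2r+ψ), α > 1+2r, L = log(α/(1+2r)), and suppose cos Δ ≥ (c+1)/L. Define w₁(t) = sin(Δ)/√K + (t-1-2r)·cos Δ + ((c+1)/(2L))·(t·log(t/(1+2r)) - t + 1 + 2r). Then for every t ∈ [1+2r, α] one has cos Δ ≤ w₁'(t) ≤ (1+3c)/2 < 1. -/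
open Real

lemma hasDerivAt_mul_log_div_sub {a t : ℝ} (ha : a ≠ 0) (ht : t ≠ 0) :
    HasDerivAt (fun x => x * log (x / a) - x) (log (t / a)) t := by
  have hlog : HasDerivAt (fun x => log (x / a)) (1 / a / (t / a)) t :=
    ((hasDerivAt_id t).div_const a).log (div_ne_zero ht ha)
  refine (((hasDerivAt_id' t).mul hlog).sub (hasDerivAt_id' t)).congr_deriv ?_
  field_simp
  ring

lemma cos_arcsin_sqrt_one_sub_sq {c : ℝ} (hc : 0 ≤ c) (hc1 : c ≤ 1) :
    cos (arcsin (√(1 - c ^ 2))) = c := by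
  rw [cos_arcsin, sq_sqrt (by nlinarith), sub_sub_cancel, sqrt_sq hc]

lemma cos_mul_two_mul_add_le {c s ψ r : ℝ} (hc : 0 ≤ c) (hc1 : c ≤ 1) (hs : 0 < s)
    (hψ : ψ = arcsin (√(1 - c ^ 2)) / s) (hr : 0 ≤ r) (hr' : r ≤ π / (4 * s) - ψ / 2) :
    cos (s * (2 * r + ψ)) ≤ c := by
  have hsψ : s * ψ = arcsin (√(1 - c ^ 2)) := by
    rw [hψ]
    field_simp
  have hle : s * (2 * r + ψ) ≤ π / 2 := by
    have h : 2 * r + ψ ≤ π / (2 * s) := by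
      rw [show π / (2 * s) = 2 * (π / (4 * s)) by ring]
      linarith
    calc s * (2 * r + ψ) ≤ s * (π / (2 * s)) := mul_le_mul_of_nonneg_left h hs.le
      _ = π / 2 := by field_simp
  calc cos (s * (2 * r + ψ)) ≤ cos (arcsin (√(1 - c ^ 2))) :=
        cos_le_cos_of_nonneg_of_le_pi (arcsin_nonneg.2 (sqrt_nonneg _))
          (by linarith [pi_pos]) (by nlinarith)
    _ = c := cos_arcsin_sqrt_one_sub_sq hc hc1

theorem statement_2_general (c K ψ r Δ α L : ℝ) (w₁ : ℝ → ℝ)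
    (hc : 0 < c) (hc' : c < 1/3)
    (hK : K = (1 - c^2) / c^2)
    (hψ : ψ = Real.arcsin (Real.sqrt (1 - c^2)) / Real.sqrt K)
    (hr : 0 < r) (hr' : r ≤ π / (4 * Real.sqrt K) - ψ / 2)
    (hΔ : Δ = Real.sqrt K * (2*r + ψ))
    (hα : α > 1 + 2*r)
    (hL : L = Real.log (α / (1 + 2*r)))
    (hw : w₁ = fun t => Real.sin Δ / Real.sqrt K + (t - 1 - 2*r) * Real.cos Δ
      + ((c + 1) / (2 * L)) * (t * Real.log (t / (1 + 2*r)) - t + 1 + 2*r)) :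
    ∀ t ∈ Set.Icc (1 + 2*r) α,
      Real.cos Δ ≤ deriv w₁ t ∧ deriv w₁ t ≤ (1 + 3*c)/2 ∧ (1 + 3*c)/2 < 1 := by
  rintro t ⟨ht₁, ht₂⟩
  have ha : 0 < 1 + 2 * r := by linarith
  have hL₀ : 0 < L := hL ▸ log_pos ((one_lt_div ha).2 hα)
  have hK₀ : 0 < K := hK ▸ div_pos (by nlinarith) (by positivity)
  have hcosΔ : cos Δ ≤ c :=
    hΔ ▸ cos_mul_two_mul_add_le hc.le (by linarith) (sqrt_pos.2 hK₀) hψ hr.le hr'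
  have hlog₀ : 0 ≤ log (t / (1 + 2 * r)) := log_nonneg ((one_le_div ha).2 ht₁)
  have hlogL : log (t / (1 + 2 * r)) ≤ L :=
    hL ▸ log_le_log (div_pos (by linarith) ha) (div_le_div_of_nonneg_right ht₂ ha.le)
  have hderiv : deriv w₁ t = cos Δ + (c + 1) / (2 * L) * log (t / (1 + 2 * r)) := by
    subst hw
    refine HasDerivAt.deriv ?_
    refine ((((((hasDerivAt_id' t).sub_const 1).sub_const (2 * r)).mul_const (cos Δ)).const_add
      (sin Δ / √K)).add ((((hasDerivAt_mul_log_div_sub ha.ne' (by linarith)).add_const 1).add_const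
        (2 * r)).const_mul ((c + 1) / (2 * L)))).congr_deriv ?_
    ring
  have hAL : (c + 1) / (2 * L) * L = (c + 1) / 2 := by field_simp
  rw [hderiv]
  refine ⟨le_add_of_nonneg_right (by positivity), ?_, by linarith⟩
  calc cos Δ + (c + 1) / (2 * L) * log (t / (1 + 2 * r)) ≤ c + (c + 1) / (2 * L) * L :=
        add_le_add hcosΔ (mul_le_mul_of_nonneg_left hlogL (by positivity))
    _ = (1 + 3 * c) / 2 := by rw [hAL]; ring

/-- with `L = log(α/(1+2r))`, `cos Δ ≥ (c+1)/L`, and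
`w₁(t) = sin(Δ)/√K + (t-1-2r)cos Δ + ((c+1)/(2L))(t log(t/(1+2r)) - t + 1 + 2r)`,
for every `t ∈ [1+2r, α]` one has `cos Δ ≤ w₁'(t) ≤ (1+3c)/2 < 1`. -/
theorem statement_2 (c K ψ r Δ α L : ℝ) (w₁ : ℝ → ℝ)
    (hc : 0 < c) (hc' : c < 1/3)
    (hK : K = (1 - c^2) / c^2)
    (hψ : ψ = Real.arcsin (Real.sqrt (1 - c^2)) / Real.sqrt K)
    (hr : 0 < r) (hr' : r ≤ π / (4 * Real.sqrt K) - ψ / 2)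
    (hΔ : Δ = Real.sqrt K * (2*r + ψ))
    (hα : α > 1 + 2*r)
    (hL : L = Real.log (α / (1 + 2*r)))
    (hcos : Real.cos Δ ≥ (c + 1) / L)
    (hw : w₁ = fun t => Real.sin Δ / Real.sqrt K + (t - 1 - 2*r) * Real.cos Δ
      + ((c + 1) / (2 * L)) * (t * Real.log (t / (1 + 2*r)) - t + 1 + 2*r)) :
    ∀ t ∈ Set.Icc (1 + 2*r) α,
      Real.cos Δ ≤ deriv w₁ t ∧ deriv w₁ t ≤ (1 + 3*c)/2 ∧ (1 + 3*c)/2 < 1 :=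
  statement_2_general c K ψ r Δ α L w₁ hc hc' hK hψ hr hr' hΔ hα hL hw
end

section
/- Let 0 < c < 1/3, K = (1-c^2)/c^2, ψ = arcsin(√(1-c^2))/√K, 0 < r ≤ π/(4√K) - ψ/2, Δ = √K(2r+ψ), and 0 < γ < 1/4. There exists α₁ > 1+2r, depending only on c, r, γ, such that for every α ≥ α₁, with L = log(α/(1+2r)) and w₁(t) = sin(Δ)/√K + (t-1-2r)·cos Δ + ((c+1)/(2L))·(t·log(t/(1+2r)) - t + 1 + 2r), one has w₁(t) > 0 and -3·w₁''(t)/w₁(t) + γ(1-2γ)/t² > 0 for all t ∈ [1+2r, α]. -/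
open Real

/- Since `w₁'' = C / t` with `C = (c+1)/(2L)`, both claims follow from `3 C t < ε w₁(t)`, where
`ε = γ(1-2γ) > 0`. As `0 < Δ ≤ π/2`, the first term of `w₁` is a positive constant `s` and the
second is nonnegative. With `a = 1+2r`, Fenchel–Young gives `t log(t/a) ≥ (1 + 3/ε) t - a e^{3/ε}`,
so the last term is at least `3 C t / ε - C a e^{3/ε}`, and `C a e^{3/ε} ≤ s` once `L` is large. -/

/-- The function `w₁` of the construction (for given constants `c, K, Δ, r, α`). -/
noncomputable def w₁fun (c K Δ r α : ℝ) : ℝ → ℝ := fun t =>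
  Real.sin Δ / Real.sqrt K + (t - 1 - 2*r) * Real.cos Δ
    + ((c + 1) / (2 * Real.log (α / (1 + 2*r))))
      * (t * Real.log (t / (1 + 2*r)) - t + 1 + 2*r)

/-- Fenchel–Young inequality for `x ↦ x log (x / a)`. -/
lemma mul_sub_mul_exp_le_mul_log_div {a t : ℝ} (ha : 0 < a) (ht : 0 < t) (k : ℝ) :
    k * t - a * exp (k - 1) ≤ t * log (t / a) := by
  have h := add_one_le_exp (k - 1 - log (t / a))
  rw [exp_sub, exp_log (div_pos ht ha), div_div_eq_mul_div, le_div_iff₀ ht] at h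
  linarith

lemma hasDerivAt_mul_log_div {a t : ℝ} (ha : a ≠ 0) (ht : t ≠ 0) :
    HasDerivAt (fun x => x * log (x / a)) (log (t / a) + 1) t := by
  have h := (hasDerivAt_id' t).mul (((hasDerivAt_id' t).div_const a).log (div_ne_zero ht ha))
  refine h.congr_deriv ?_
  field_simp

section Derivatives

variable {c K Δ r α t : ℝ}

lemma hasDerivAt_w₁fun (ha : 1 + 2*r ≠ 0) (ht : t ≠ 0) :
    HasDerivAt (w₁fun c K Δ r α)
      (cos Δ + (c + 1) / (2 * log (α / (1 + 2*r))) * log (t / (1 + 2*r))) t := by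
  have h := ((((hasDerivAt_id t).sub_const 1).sub_const (2*r)).mul_const (cos Δ)).const_add
    (sin Δ / √K) |>.add <| (((((hasDerivAt_mul_log_div ha ht).sub (hasDerivAt_id t)).add_const
      1).add_const (2*r)).const_mul ((c + 1) / (2 * log (α / (1 + 2*r)))))
  exact h.congr_deriv (by ring)

lemma deriv_deriv_w₁fun (ha : 1 + 2*r ≠ 0) (ht : 0 < t) :
    deriv (deriv (w₁fun c K Δ r α)) t = (c + 1) / (2 * log (α / (1 + 2*r))) / t := by
  have hderiv : deriv (w₁fun c K Δ r α) =ᶠ[nhds t]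
      fun x => cos Δ + (c + 1) / (2 * log (α / (1 + 2*r))) * log (x / (1 + 2*r)) := by
    filter_upwards [eventually_ne_nhds ht.ne'] with x hx
    exact (hasDerivAt_w₁fun ha hx).deriv
  rw [hderiv.deriv_eq]
  have h := ((((hasDerivAt_id' t).div_const (1 + 2*r)).log (div_ne_zero ht.ne' ha)).const_mul
    ((c + 1) / (2 * log (α / (1 + 2*r))))).const_add (cos Δ)
  rw [h.deriv]
  field_simp

end Derivatives

lemma three_mul_lt_mul_of_mul_exp_le {a s B C ε t : ℝ} (ha : 0 < a) (hB : 0 ≤ B) (hC : 0 < C)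
    (hε : 0 < ε) (hCs : C * a * exp (3 / ε) ≤ s) (ht : a ≤ t) :
    3 * C * t < ε * (s + (t - a) * B + C * (t * log (t / a) - t + a)) := by
  have hlog := mul_sub_mul_exp_le_mul_log_div ha (ha.trans_le ht) (1 + 3 / ε)
  rw [add_sub_cancel_left] at hlog
  have hlog' : 3 * t ≤ ε * (t * log (t / a) - t + a * exp (3 / ε)) := by
    have e : ε * (3 / ε * t) = 3 * t := by field_simp
    linarith [mul_le_mul_of_nonneg_left hlog hε.le]
  have hsB : 0 ≤ ε * ((t - a) * B) := mul_nonneg hε.le (mul_nonneg (sub_nonneg.2 ht) hB)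
  have hεCa : 0 < ε * C * a := by positivity
  linarith [mul_le_mul_of_nonneg_left hCs hε.le, mul_le_mul_of_nonneg_left hlog' hC.le]

lemma pos_and_neg_three_mul_div_add_pos {C t w ε : ℝ} (hC : 0 < C) (ht : 0 < t) (hε : 0 < ε)
    (h : 3 * C * t < ε * w) : 0 < w ∧ -3 * (C / t) / w + ε / t ^ 2 > 0 := by
  have hw : 0 < w := pos_of_mul_pos_right ((by positivity : 0 < 3 * C * t).trans h) hε.le
  refine ⟨hw, ?_⟩
  have e : -3 * (C / t) / w + ε / t ^ 2 = (ε * w - 3 * C * t) / (t ^ 2 * w) := by field_simp; ring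
  rw [e]
  exact div_pos (by linarith) (by positivity)

lemma sqrt_mul_mem_Ioc {K ψ r : ℝ} (hK : 0 < K) (hψ : 0 ≤ ψ) (hr : 0 < r)
    (hr' : r ≤ π / (4 * √K) - ψ / 2) : √K * (2*r + ψ) ∈ Set.Ioc 0 (π / 2) := by
  have hsK : 0 < √K := sqrt_pos.2 hK
  refine ⟨by positivity, ?_⟩
  have e : π / 2 = √K * (2 * (π / (4 * √K))) := by field_simp; ring
  rw [e]
  gcongr
  linarith

/-- there exists `α₁ > 1+2r`, depending only on `c, r, γ`, such that for
every `α ≥ α₁` one has `w₁(t) > 0` and `-3 w₁''(t)/w₁(t) + γ(1-2γ)/t² > 0` for all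
`t ∈ [1+2r, α]`. -/
theorem statement_3 (c K ψ r Δ γ : ℝ)
    (hc : 0 < c) (hc' : c < 1/3)
    (hK : K = (1 - c^2) / c^2)
    (hψ : ψ = Real.arcsin (Real.sqrt (1 - c^2)) / Real.sqrt K)
    (hr : 0 < r) (hr' : r ≤ π / (4 * Real.sqrt K) - ψ / 2)
    (hΔ : Δ = Real.sqrt K * (2*r + ψ))
    (hγ : 0 < γ) (hγ' : γ < 1/4) :
    ∃ α₁ : ℝ, α₁ > 1 + 2*r ∧ ∀ α ≥ α₁, ∀ t ∈ Set.Icc (1 + 2*r) α,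
      0 < w₁fun c K Δ r α t ∧
      -3 * deriv (deriv (w₁fun c K Δ r α)) t / w₁fun c K Δ r α t
        + γ * (1 - 2*γ) / t^2 > 0 := by
  have hK0 : 0 < K := hK ▸ div_pos (by nlinarith) (by positivity)
  have hψ0 : 0 ≤ ψ := hψ ▸ div_nonneg (arcsin_nonneg.2 (sqrt_nonneg _)) (sqrt_nonneg K)
  obtain ⟨hΔ0, hΔ1⟩ := hΔ ▸ sqrt_mul_mem_Ioc hK0 hψ0 hr hr'
  set a := 1 + 2*r
  set s := sin Δ / √K
  set ε := γ * (1 - 2*γ)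
  have ha : 0 < a := by positivity
  have hs : 0 < s := div_pos (sin_pos_of_pos_of_lt_pi hΔ0 (by linarith [pi_pos])) (sqrt_pos.2 hK0)
  have hε : 0 < ε := mul_pos hγ (by linarith)
  set L₁ := (c + 1) * a * exp (3 / ε) / (2 * s)
  have hL₁ : 0 < L₁ := div_pos (by positivity) (by positivity)
  refine ⟨a * exp L₁, lt_mul_of_one_lt_right ha (one_lt_exp_iff.2 hL₁), ?_⟩
  intro α hα t ⟨hat, _⟩
  have hαa : 0 < α / a := div_pos ((by positivity : 0 < a * exp L₁).trans_le hα) ha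
  set L := log (α / a)
  have hL : L₁ ≤ L := (le_log_iff_exp_le hαa).2 ((le_div_iff₀' ha).2 hα)
  have hL0 : 0 < L := hL₁.trans_le hL
  have hCs : (c + 1) / (2 * L) * a * exp (3 / ε) ≤ s := by
    rw [div_mul_eq_mul_div, div_mul_eq_mul_div, div_le_iff₀ (by positivity)]
    linarith [(div_le_iff₀ (by positivity : 0 < 2 * s)).1 hL]
  have hkey := three_mul_lt_mul_of_mul_exp_le ha (cos_nonneg_of_mem_Icc ⟨by linarith, hΔ1⟩)
    (by positivity) hε hCs hat
  have hw : w₁fun c K Δ r α t =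
      s + (t - a) * cos Δ + (c + 1) / (2 * L) * (t * log (t / a) - t + a) := by
    simp only [w₁fun, a, s, L]; ring
  rw [deriv_deriv_w₁fun ha.ne' (ha.trans_le hat), hw]
  exact pos_and_neg_three_mul_div_add_pos (by positivity) (ha.trans_le hat) hε hkey
end

section
/- Let s > 0, r > 0, α > 1+2r, 0 < γ < 1/4, and 1/2 ≤ β ≤ 2. Let g be positive with g'(t)/g(t) = h(t), where h(t) = 6γβ·(t-(1+11r/6)s)/((1+2r)·r·s²) on the interval [(1+11r/6)s, (1+2r)s], and h(t) = 6γβ·(α(1+r/6)s - t)/(α²·r·s²) on the interval [αs, α(1+r/6)s]. Then |g''(t)/g(t)| ≤ 12γ(1+rγ/3)/(r·s²) on the first interval, and |g''(t)/g(t)| ≤ 12γ(1+rγ/3)/(r·(αs)²) on the second interval. -/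
/-!
Since `g' = h g`, wherever `g'` is differentiable we have `g''/g = h' + h²`; elsewhere Lean's
`deriv` is `0` and the bound is trivial. On each piece `h` is affine: its slope is
`±6γβ/(κ r σ²)` with `κ ≥ 1` (`κ = 1 + 2r`, `σ = s` on the first piece, `κ = 1`, `σ = αs` on the
second), and it vanishes at one end of an interval of length `rσ/6`, so `0 ≤ h ≤ γβ/σ ≤ 2γ/σ`.
Hence `|h' + h²| ≤ 12γ/(rσ²) + 4γ²/σ² = 12γ(1 + rγ/3)/(rσ²)`.
-/

open Set

theorem deriv_deriv_eq_of_hasDerivAt_mul {s : Set ℝ} {g h : ℝ → ℝ} {h' t : ℝ}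
    (hs : UniqueDiffWithinAt ℝ s t) (ht : t ∈ s) (hh : HasDerivWithinAt h h' s t)
    (hg : ∀ x ∈ s, HasDerivAt g (h x * g x) x) (hd : DifferentiableAt ℝ (deriv g) t) :
    deriv (deriv g) t = (h' + h t ^ 2) * g t := by
  have hg' : HasDerivWithinAt (deriv g) (h' * g t + h t * (h t * g t)) s t :=
    (hh.mul (hg t ht).hasDerivWithinAt).congr (fun x hx => (hg x hx).deriv) (hg t ht).deriv
  rw [← hd.hasDerivAt.hasDerivWithinAt.derivWithin hs, hg'.derivWithin hs]
  ring

theorem abs_deriv_deriv_div_le_of_hasDerivAt_mul {a b k : ℝ} {g h h' : ℝ → ℝ} (hab : a < b)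
    (hh : ∀ t ∈ Icc a b, HasDerivWithinAt h (h' t) (Icc a b) t)
    (hg : ∀ t ∈ Icc a b, HasDerivAt g (h t * g t) t) (hg0 : ∀ t ∈ Icc a b, g t ≠ 0)
    (hk : ∀ t ∈ Icc a b, |h' t + h t ^ 2| ≤ k) :
    ∀ t ∈ Icc a b, |deriv (deriv g) t / g t| ≤ k := by
  intro t ht
  by_cases hd : DifferentiableAt ℝ (deriv g) t
  · rw [deriv_deriv_eq_of_hasDerivAt_mul (uniqueDiffOn_Icc hab t ht) ht (hh t ht) hg hd,
      mul_div_cancel_right₀ _ (hg0 t ht)]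
    exact hk t ht
  · rw [deriv_zero_of_not_differentiableAt hd, zero_div, abs_zero]
    exact (abs_nonneg _).trans (hk t ht)

theorem abs_slope_add_sq_le {γ β r σ κ D u c : ℝ} (hγ : 0 ≤ γ) (hr : 0 < r) (hσ : 0 < σ)
    (hκ : 1 ≤ κ) (hD : D = κ * r * σ ^ 2) (hβ : β ∈ Icc 0 2) (hu : u ∈ Icc 0 (r * σ / 6))
    (hc : |c| = 6 * γ * β / D) :
    |c + (6 * γ * β * u / D) ^ 2| ≤ 12 * γ * (1 + r * γ / 3) / (r * σ ^ 2) := by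
  obtain ⟨hβ0, hβ2⟩ := hβ
  obtain ⟨hu0, hu⟩ := hu
  have hD0 : 0 < D := by rw [hD]; positivity
  have hslope : |c| ≤ 12 * γ / (r * σ ^ 2) := by
    rw [hc, div_le_div_iff₀ hD0 (by positivity), hD]
    calc 6 * γ * β * (r * σ ^ 2) ≤ 6 * γ * 2 * (1 * r * σ ^ 2) := by rw [one_mul]; gcongr
      _ ≤ 6 * γ * 2 * (κ * r * σ ^ 2) := by gcongr
      _ = 12 * γ * (κ * r * σ ^ 2) := by ring
  have hval0 : 0 ≤ 6 * γ * β * u / D := by positivity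
  have hval : 6 * γ * β * u / D ≤ 2 * γ / σ := by
    rw [div_le_div_iff₀ hD0 hσ, hD]
    calc 6 * γ * β * u * σ = 6 * γ * σ * (β * u) := by ring
      _ ≤ 6 * γ * σ * (2 * (r * σ / 6)) := by gcongr
      _ = 2 * γ * (1 * r * σ ^ 2) := by ring
      _ ≤ 2 * γ * (κ * r * σ ^ 2) := by gcongr
  calc |c + (6 * γ * β * u / D) ^ 2| ≤ |c| + (6 * γ * β * u / D) ^ 2 :=
        (abs_add_le _ _).trans_eq (by rw [abs_sq])
    _ ≤ 12 * γ / (r * σ ^ 2) + (2 * γ / σ) ^ 2 :=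
        add_le_add hslope (pow_le_pow_left₀ hval0 hval 2)
    _ = 12 * γ * (1 + r * γ / 3) / (r * σ ^ 2) := by field_simp; ring

theorem statement_8_general (s r α γ β : ℝ) (g : ℝ → ℝ)
    (hs : 0 < s) (hr : 0 < r) (hα : α > 1 + 2*r)
    (hγ : 0 < γ)
    (hβ₁ : 1/2 ≤ β) (hβ₂ : β ≤ 2)
    (hgpos₁ : ∀ t ∈ Set.Icc ((1 + 11*r/6) * s) ((1 + 2*r) * s), 0 < g t)
    (hgpos₂ : ∀ t ∈ Set.Icc (α * s) (α * (1 + r/6) * s), 0 < g t)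
    (hg₁ : ∀ t ∈ Set.Icc ((1 + 11*r/6) * s) ((1 + 2*r) * s),
      HasDerivAt g ((6*γ*β * (t - (1 + 11*r/6) * s) / ((1 + 2*r) * r * s^2)) * g t) t)
    (hg₂ : ∀ t ∈ Set.Icc (α * s) (α * (1 + r/6) * s),
      HasDerivAt g ((6*γ*β * (α * (1 + r/6) * s - t) / (α^2 * r * s^2)) * g t) t) :
    (∀ t ∈ Set.Icc ((1 + 11*r/6) * s) ((1 + 2*r) * s),
      |deriv (deriv g) t / g t| ≤ 12*γ * (1 + r*γ/3) / (r * s^2)) ∧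
    (∀ t ∈ Set.Icc (α * s) (α * (1 + r/6) * s),
      |deriv (deriv g) t / g t| ≤ 12*γ * (1 + r*γ/3) / (r * (α * s)^2)) := by
  have hβ : β ∈ Icc 0 2 := ⟨by linarith, hβ₂⟩
  have hα₀ : 0 < α := by linarith
  constructor
  · refine abs_deriv_deriv_div_le_of_hasDerivAt_mul (h' := fun _ => 6*γ*β / ((1 + 2*r) * r * s^2))
      (by nlinarith [mul_pos hr hs]) (fun t _ => ?_) hg₁ (fun t ht => (hgpos₁ t ht).ne')
      fun t ⟨ht₁, ht₂⟩ => ?_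
    · simpa using ((((hasDerivAt_id t).sub_const ((1 + 11*r/6) * s)).const_mul
        (6*γ*β)).div_const ((1 + 2*r) * r * s^2)).hasDerivWithinAt
    · exact abs_slope_add_sq_le hγ.le hr hs (by linarith) rfl hβ ⟨by linarith, by linarith⟩
        (abs_of_pos (by positivity))
  · refine abs_deriv_deriv_div_le_of_hasDerivAt_mul (h' := fun _ => -(6*γ*β / (α^2 * r * s^2)))
      (by nlinarith [mul_pos (mul_pos hα₀ hr) hs]) (fun t _ => ?_) hg₂
      (fun t ht => (hgpos₂ t ht).ne') fun t ⟨ht₁, ht₂⟩ => ?_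
    · simpa [neg_div] using ((((hasDerivAt_id t).const_sub (α * (1 + r/6) * s)).const_mul
        (6*γ*β)).div_const (α^2 * r * s^2)).hasDerivWithinAt
    · exact abs_slope_add_sq_le hγ.le hr (mul_pos hα₀ hs) le_rfl (by ring) hβ
        ⟨by linarith, by linarith⟩ (by rw [abs_neg, abs_of_pos (by positivity)])

/-- if `g > 0` satisfies `g'/g = h` with
`h(t) = 6γβ(t-(1+11r/6)s)/((1+2r)rs²)` on `[(1+11r/6)s, (1+2r)s]` and
`h(t) = 6γβ(α(1+r/6)s - t)/(α²rs²)` on `[αs, α(1+r/6)s]`, then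
`|g''/g| ≤ 12γ(1+rγ/3)/(rs²)` on the first interval and
`|g''/g| ≤ 12γ(1+rγ/3)/(r(αs)²)` on the second interval. -/
theorem statement_8 (s r α γ β : ℝ) (g : ℝ → ℝ)
    (hs : 0 < s) (hr : 0 < r) (hα : α > 1 + 2*r)
    (hγ : 0 < γ) (hγ' : γ < 1/4)
    (hβ₁ : 1/2 ≤ β) (hβ₂ : β ≤ 2)
    (hgpos₁ : ∀ t ∈ Set.Icc ((1 + 11*r/6) * s) ((1 + 2*r) * s), 0 < g t)
    (hgpos₂ : ∀ t ∈ Set.Icc (α * s) (α * (1 + r/6) * s), 0 < g t)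
    (hg₁ : ∀ t ∈ Set.Icc ((1 + 11*r/6) * s) ((1 + 2*r) * s),
      HasDerivAt g ((6*γ*β * (t - (1 + 11*r/6) * s) / ((1 + 2*r) * r * s^2)) * g t) t)
    (hg₂ : ∀ t ∈ Set.Icc (α * s) (α * (1 + r/6) * s),
      HasDerivAt g ((6*γ*β * (α * (1 + r/6) * s - t) / (α^2 * r * s^2)) * g t) t) :
    (∀ t ∈ Set.Icc ((1 + 11*r/6) * s) ((1 + 2*r) * s),
      |deriv (deriv g) t / g t| ≤ 12*γ * (1 + r*γ/3) / (r * s^2)) ∧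
    (∀ t ∈ Set.Icc (α * s) (α * (1 + r/6) * s),
      |deriv (deriv g) t / g t| ≤ 12*γ * (1 + r*γ/3) / (r * (α * s)^2)) :=
  statement_8_general s r α γ β g hs hr hα hγ hβ₁ hβ₂ hgpos₁ hgpos₂ hg₁ hg₂
end

section
/- Let m ≥ 2 and n ≥ 3 be integers, let 0 < c < 1/3, K = (1-c^2)/c^2, ψ = arcsin(√(1-c^2))/√K, 0 < r ≤ π/(4√K) - ψ/2 with Δ = √K(2r+ψ) satisfying cos Δ > 0, let 0 < γ < 1/4 and α > 1+2r. There exists T₀ > 0, depending only on m, n, c, r, γ, α, such that for every t ≥ T₀ and all real numbers g, G, q, u, p satisfying 0 < g ≤ α^γ·t^γ, |G| ≤ 2(1+r/6)γ/t, q/g ≤ 12γ(1+2r)(1+rγ/3)/(r·t²), u ≥ (cos Δ)·t, and 0 ≤ p ≤ (1+3c)/2, one has (n-2)·(1/g² - G²) - q/g - m·(p/u)·G > 0. -/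
/-!
Since `2γ < 1`, the hypothesis `g ≤ (αt)^γ` gives `1/g² ≥ 1/(αt)`, whereas each of the
three negative terms `(n-2)G²`, `q/g` and `m (p/u) G` is `O(1/t²)` with a constant depending
only on the parameters. The positive term therefore wins once `t` exceeds `α` times the sum of
these constants.
-/

open Real

lemma sq_le_of_le_rpow {x γ g : ℝ} (hx : 1 ≤ x) (hγ : γ ≤ 1 / 2) (hg : 0 ≤ g)
    (hgx : g ≤ x ^ γ) : g ^ 2 ≤ x :=
  calc g ^ 2 ≤ (x ^ γ) ^ 2 := pow_le_pow_left₀ hg hgx 2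
    _ = x ^ (γ * 2) := by rw [← rpow_mul_natCast (by linarith)]; norm_cast
    _ ≤ x ^ (1 : ℝ) := rpow_le_rpow_of_exponent_le hx (by linarith)
    _ = x := rpow_one x

lemma sub_div_sq_le_of_abs_le {N M g G q w a b e t : ℝ} (hN : 0 ≤ N) (hM : 0 ≤ M)
    (hG : |G| ≤ a / t) (hq : q / g ≤ b / t ^ 2) (hw₀ : 0 ≤ w) (hw : w ≤ e / t) :
    N / g ^ 2 - (N * a ^ 2 + b + M * e * a) / t ^ 2 ≤
      N * (1 / g ^ 2 - G ^ 2) - q / g - M * w * G := by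
  have hGsq : G ^ 2 ≤ (a / t) ^ 2 := sq_le_sq' (abs_le.mp hG).1 (abs_le.mp hG).2
  have hwG : M * w * G ≤ M * (e / t) * (a / t) :=
    calc M * w * G ≤ M * w * |G| := mul_le_mul_of_nonneg_left (le_abs_self G) (by positivity)
      _ ≤ M * (e / t) * (a / t) :=
        mul_le_mul (mul_le_mul_of_nonneg_left hw hM) hG (abs_nonneg G)
          (mul_nonneg hM (hw₀.trans hw))
  have hNG : N * G ^ 2 ≤ N * (a / t) ^ 2 := mul_le_mul_of_nonneg_left hGsq hN
  have hsplit : (N * a ^ 2 + b + M * e * a) / t ^ 2 =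
      N * (a / t) ^ 2 + b / t ^ 2 + M * (e / t) * (a / t) := by ring
  rw [hsplit]
  linarith [show N * (1 / g ^ 2 - G ^ 2) = N / g ^ 2 - N * G ^ 2 by ring]

lemma div_sq_lt_one_div_mul {α D t : ℝ} (hα : 0 < α) (ht : 0 < t) (hD : α * D < t) :
    D / t ^ 2 < 1 / (α * t) := by
  rw [div_lt_div_iff₀ (by positivity) (by positivity)]
  nlinarith

theorem statement_10_general (m n : ℕ) (hn : 3 ≤ n)
    (c r Δ γ α : ℝ)
    (hr : 0 < r)
    (hcosΔ : 0 < Real.cos Δ)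
    (hγ' : γ < 1/4) (hα : α > 1 + 2*r) :
    ∃ T₀ : ℝ, 0 < T₀ ∧ ∀ t ≥ T₀, ∀ g G q u p : ℝ,
      0 < g → g ≤ α ^ γ * t ^ γ →
      |G| ≤ 2 * (1 + r/6) * γ / t →
      q/g ≤ 12*γ * (1 + 2*r) * (1 + r*γ/3) / (r * t^2) →
      u ≥ Real.cos Δ * t →
      0 ≤ p → p ≤ (1 + 3*c)/2 →
      ((n : ℝ) - 2) * (1/g^2 - G^2) - q/g - (m : ℝ) * (p/u) * G > 0 := by
  have hα₁ : 1 < α := by linarith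
  have hn₂ : (1 : ℝ) ≤ n - 2 := by
    have : (3 : ℝ) ≤ n := by exact_mod_cast hn
    linarith
  set a := 2 * (1 + r/6) * γ
  set b := 12*γ * (1 + 2*r) * (1 + r*γ/3) / r
  set e := (1 + 3*c)/2 / Real.cos Δ
  set D := ((n : ℝ) - 2) * a ^ 2 + b + m * e * a
  refine ⟨max 1 (α * D) + 1, by positivity, fun t ht g G q u p hg hgt hG hq hu hp hp' => ?_⟩
  have ht₁ : 1 ≤ t := by linarith [le_max_left 1 (α * D)]
  have htD : α * D < t := by linarith [le_max_right 1 (α * D)]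
  have hg₂ : g ^ 2 ≤ α * t :=
    sq_le_of_le_rpow (γ := γ) (by nlinarith) (by linarith) hg.le
      (by rwa [mul_rpow (by linarith) (by linarith)])
  have hpu : p / u ≤ e / t :=
    calc p / u ≤ (1 + 3*c)/2 / (Real.cos Δ * t) :=
          div_le_div₀ (hp.trans hp') hp' (by positivity) hu
      _ = e / t := (div_div _ _ _).symm
  have hmain := sub_div_sq_le_of_abs_le (N := (n : ℝ) - 2) (g := g) (b := b) (by linarith)
    (Nat.cast_nonneg m) hG (hq.trans_eq (div_div _ _ _).symm) (div_nonneg hp (by nlinarith)) hpu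
  have hdom : D / t ^ 2 < ((n : ℝ) - 2) / g ^ 2 :=
    calc D / t ^ 2 < 1 / (α * t) := div_sq_lt_one_div_mul (by linarith) (by linarith) htD
      _ ≤ 1 / g ^ 2 := one_div_le_one_div_of_le (by positivity) hg₂
      _ ≤ ((n : ℝ) - 2) / g ^ 2 := div_le_div_of_nonneg_right hn₂ (by positivity)
  linarith

/-- positivity of `Ric(Σ,Σ)` for the doubly warped product metric. There is
`T₀ > 0`, depending only on `m, n, c, r, γ, α`, such that for all `t ≥ T₀` and reals
`g, G, q, u, p` with `0 < g ≤ α^γ t^γ`, `|G| ≤ 2(1+r/6)γ/t`,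
`q/g ≤ 12γ(1+2r)(1+rγ/3)/(rt²)`, `u ≥ (cos Δ)t`, `0 ≤ p ≤ (1+3c)/2`, one has
`(n-2)(1/g² - G²) - q/g - m(p/u)G > 0`. -/
theorem statement_10 (m n : ℕ) (hm : 2 ≤ m) (hn : 3 ≤ n)
    (c K ψ r Δ γ α : ℝ)
    (hc : 0 < c) (hc' : c < 1/3)
    (hK : K = (1 - c^2) / c^2)
    (hψ : ψ = Real.arcsin (Real.sqrt (1 - c^2)) / Real.sqrt K)
    (hr : 0 < r) (hr' : r ≤ π / (4 * Real.sqrt K) - ψ / 2)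
    (hΔ : Δ = Real.sqrt K * (2*r + ψ)) (hcosΔ : 0 < Real.cos Δ)
    (hγ : 0 < γ) (hγ' : γ < 1/4) (hα : α > 1 + 2*r) :
    ∃ T₀ : ℝ, 0 < T₀ ∧ ∀ t ≥ T₀, ∀ g G q u p : ℝ,
      0 < g → g ≤ α ^ γ * t ^ γ →
      |G| ≤ 2 * (1 + r/6) * γ / t →
      q/g ≤ 12*γ * (1 + 2*r) * (1 + r*γ/3) / (r * t^2) →
      u ≥ Real.cos Δ * t →
      0 ≤ p → p ≤ (1 + 3*c)/2 →
      ((n : ℝ) - 2) * (1/g^2 - G^2) - q/g - (m : ℝ) * (p/u) * G > 0 :=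
  statement_10_general m n hn c r Δ γ α hr hcosΔ hγ' hα
end

section
/- Let C₁ > 0, C₂ ∈ (0,1), C₃ ∈ (0,1), and N > 1/C₂, and let C₄ ∈ (0,1) satisfy C₂(1-C₄)^{C₃/(1-C₃)} = 1/N. Let t > 0, set l = C₁(NC₂)^{1/C₃}/t, and let b < R be real numbers with R - b = C₄·t/(C₁C₂(1-C₃)). Define ū(x) = C₂·(t/(C₁C₂))^{-C₃/(1-C₃)}·((1-C₃)x + N/l - (1-C₃)b)^{1/(1-C₃)} for x ∈ [b, R]. Then on [b,R]: ū'(x)/ū(x) = 1/((1-C₃)x + N/l - (1-C₃)b) and ū''(x)/ū(x) = C₃·(ū'(x)/ū(x))²; moreover ū(R) = t/C₁, ū'(R) = C₂, ū(b) = 1/l, and ū'(b) = 1/N. -/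
/-!
Write `g(x) = (1-C₃)x + N/l - (1-C₃)b`, `s = t/(C₁C₂)` and `e = C₃/(1-C₃)`, so that
`ū = C₂ s^(-e) g^(e+1)`. Since `g' = 1-C₃ = 1/(e+1)`, one gets `ū' = ū/g` and `ū'' = C₃ ū/g²`.
Solving the defining relation of `C₄` for `1 - C₄` gives `N/l = s(1-C₄)`, hence `g(b) = s(1-C₄)`
and, by the choice of `R - b`, `g(R) = s`; at a point where `g = s q` one has `ū = s q · C₂ q^e`
and `ū' = C₂ q^e`, which gives the four boundary values.
-/

open Real

section AffineRpow

variable {A k c p x : ℝ}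

theorem hasDerivAt_const_mul_affine_rpow (hx : 0 < k * x + c) :
    HasDerivAt (fun y => A * (k * y + c) ^ p) (A * k * p * (k * x + c) ^ (p - 1)) x := by
  have hlin : HasDerivAt (fun y => k * y + c) k x := by
    simpa using ((hasDerivAt_id x).const_mul k).add_const c
  exact ((hlin.rpow_const (Or.inl hx.ne')).const_mul A).congr_deriv (by ring)

theorem deriv_deriv_const_mul_affine_rpow (hx : 0 < k * x + c) :
    deriv (deriv fun y => A * (k * y + c) ^ p) x
      = A * k * p * k * (p - 1) * (k * x + c) ^ (p - 1 - 1) := by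
  have hderiv : deriv (fun y => A * (k * y + c) ^ p)
      =ᶠ[nhds x] fun y => A * k * p * (k * y + c) ^ (p - 1) := by
    have hopen : IsOpen {y : ℝ | 0 < k * y + c} := isOpen_lt continuous_const (by fun_prop)
    filter_upwards [hopen.mem_nhds hx] with y hy
    exact (hasDerivAt_const_mul_affine_rpow hy).deriv
  rw [hderiv.deriv_eq, (hasDerivAt_const_mul_affine_rpow hx).deriv]

end AffineRpow

noncomputable def warpingProfile (a s e k c : ℝ) : ℝ → ℝ :=
  fun x => a * s ^ (-e) * (k * x + c) ^ (e + 1)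

section WarpingProfile

variable {a s e k c x q : ℝ}

theorem warpingProfile_pos (ha : 0 < a) (hs : 0 < s) (hx : 0 < k * x + c) :
    0 < warpingProfile a s e k c x := by
  unfold warpingProfile
  positivity

theorem deriv_warpingProfile (hke : k * (e + 1) = 1) (hx : 0 < k * x + c) :
    deriv (warpingProfile a s e k c) x = warpingProfile a s e k c x / (k * x + c) := by
  unfold warpingProfile
  rw [(hasDerivAt_const_mul_affine_rpow hx).deriv, add_sub_cancel_right,
    rpow_add_one hx.ne', mul_assoc _ k, hke]
  field_simp

theorem deriv_deriv_warpingProfile (hke : k * (e + 1) = 1) (hx : 0 < k * x + c) :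
    deriv (deriv (warpingProfile a s e k c)) x
      = (1 - k) * warpingProfile a s e k c x / (k * x + c) ^ 2 := by
  unfold warpingProfile
  rw [deriv_deriv_const_mul_affine_rpow hx, add_sub_cancel_right,
    rpow_sub_one hx.ne', rpow_add_one hx.ne']
  field_simp
  linear_combination a * s ^ (-e) * (k * e + 1) * hke

theorem deriv_div_warpingProfile (ha : 0 < a) (hs : 0 < s) (hke : k * (e + 1) = 1)
    (hx : 0 < k * x + c) :
    deriv (warpingProfile a s e k c) x / warpingProfile a s e k c x = 1 / (k * x + c) := by
  have := (warpingProfile_pos (e := e) ha hs hx).ne'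
  rw [deriv_warpingProfile hke hx]
  field_simp

theorem deriv_deriv_div_warpingProfile (ha : 0 < a) (hs : 0 < s) (hke : k * (e + 1) = 1)
    (hx : 0 < k * x + c) :
    deriv (deriv (warpingProfile a s e k c)) x / warpingProfile a s e k c x
      = (1 - k) * (deriv (warpingProfile a s e k c) x / warpingProfile a s e k c x) ^ 2 := by
  have := (warpingProfile_pos (e := e) ha hs hx).ne'
  rw [deriv_div_warpingProfile ha hs hke hx, deriv_deriv_warpingProfile hke hx]
  field_simp

theorem warpingProfile_eq_of_eq_mul (hs : 0 < s) (hq : 0 < q) (hx : k * x + c = s * q) :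
    warpingProfile a s e k c x = s * q * (a * q ^ e) := by
  rw [warpingProfile, hx, mul_rpow hs.le hq.le, mul_assoc a, ← mul_assoc (s ^ (-e)), ← rpow_add hs,
    neg_add_cancel_left, rpow_one, rpow_add_one hq.ne']
  ring

theorem deriv_warpingProfile_eq_of_eq_mul (hs : 0 < s) (hq : 0 < q) (hke : k * (e + 1) = 1)
    (hx : k * x + c = s * q) :
    deriv (warpingProfile a s e k c) x = a * q ^ e := by
  have hsq : 0 < s * q := mul_pos hs hq
  rw [deriv_warpingProfile hke (hx ▸ hsq), warpingProfile_eq_of_eq_mul hs hq hx, hx]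
  field_simp

end WarpingProfile

theorem eq_div_rpow_one_div_of_rpow_eq_inv {q w a : ℝ} (hq : 0 ≤ q) (hw : 0 < w) (ha₀ : a ≠ 0)
    (ha₁ : a ≠ 1) (h : q ^ (a / (1 - a)) = w⁻¹) : q = w / w ^ (1 / a) := by
  have he : a / (1 - a) ≠ 0 := div_ne_zero ha₀ (sub_ne_zero.mpr (Ne.symm ha₁))
  calc q = (q ^ (a / (1 - a))) ^ (a / (1 - a))⁻¹ := (rpow_rpow_inv hq he).symm
    _ = w ^ (1 - 1 / a) := by
      rw [h, inv_rpow hw.le, ← rpow_neg hw.le]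
      congr 1
      field_simp
      ring
    _ = w / w ^ (1 / a) := by rw [rpow_sub hw, rpow_one]

theorem div_eq_mul_one_sub_of_rpow_eq {C₁ C₂ C₃ N C₄ t l : ℝ} (hN : 0 < N) (hC₂ : 0 < C₂)
    (hC₃ : C₃ ∈ Set.Ioo (0:ℝ) 1) (hC₄ : C₄ < 1)
    (hC₄eq : C₂ * (1 - C₄) ^ (C₃ / (1 - C₃)) = 1 / N) (hl : l = C₁ * (N * C₂) ^ (1 / C₃) / t) :
    N / l = t / (C₁ * C₂) * (1 - C₄) := by
  have hC₄' : 0 < 1 - C₄ := sub_pos.mpr hC₄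
  have hq : (1 - C₄) ^ (C₃ / (1 - C₃)) = (N * C₂)⁻¹ := by
    rw [mul_inv, ← one_div, ← hC₄eq]
    field_simp
  rw [hl, eq_div_rpow_one_div_of_rpow_eq_inv hC₄'.le (by positivity) hC₃.1.ne' hC₃.2.ne hq]
  field_simp

theorem statement_15_general (C₁ C₂ C₃ N C₄ t l b R : ℝ) (ub : ℝ → ℝ)
    (hC₁ : 0 < C₁) (hC₂ : C₂ ∈ Set.Ioo (0:ℝ) 1) (hC₃ : C₃ ∈ Set.Ioo (0:ℝ) 1)
    (hC₄ : C₄ ∈ Set.Ioo (0:ℝ) 1)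
    (hC₄eq : C₂ * (1 - C₄) ^ (C₃ / (1 - C₃)) = 1/N)
    (ht : 0 < t)
    (hl : l = C₁ * (N * C₂) ^ (1/C₃) / t)
    (hRb : R - b = C₄ * t / (C₁ * C₂ * (1 - C₃)))
    (hub : ub = fun x => C₂ * (t / (C₁ * C₂)) ^ (-(C₃ / (1 - C₃)))
      * ((1 - C₃) * x + N/l - (1 - C₃) * b) ^ (1 / (1 - C₃))) :
    (∀ x ∈ Set.Icc b R,
      deriv ub x / ub x = 1 / ((1 - C₃) * x + N/l - (1 - C₃) * b) ∧
      deriv (deriv ub) x / ub x = C₃ * (deriv ub x / ub x)^2) ∧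
    ub R = t / C₁ ∧ deriv ub R = C₂ ∧ ub b = 1/l ∧ deriv ub b = 1/N := by
  obtain ⟨hC₂, -⟩ := hC₂
  have hC₃' : 1 - C₃ ≠ 0 := sub_ne_zero.mpr hC₃.2.ne'
  have hC₄' : 0 < 1 - C₄ := sub_pos.mpr hC₄.2
  have hN : 0 < N := one_div_pos.mp (hC₄eq ▸ by positivity)
  set s := t / (C₁ * C₂) with hs_def
  set c := N / l - (1 - C₃) * b with hc_def
  have hs : 0 < s := div_pos ht (mul_pos hC₁ hC₂)
  have hNl : N / l = s * (1 - C₄) := div_eq_mul_one_sub_of_rpow_eq hN hC₂ hC₃ hC₄.2 hC₄eq hl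
  have hgR : (1 - C₃) * R + c = s * 1 := by
    have : (1 - C₃) * (R - b) = C₄ * s := by rw [hRb, hs_def]; field_simp
    linear_combination this + hNl
  have hgb : (1 - C₃) * b + c = s * (1 - C₄) := by rw [← hNl]; ring
  have hke : (1 - C₃) * (C₃ / (1 - C₃) + 1) = 1 := by field_simp; ring
  replace hub : ub = warpingProfile C₂ s (C₃ / (1 - C₃)) (1 - C₃) c := by
    unfold warpingProfile
    rw [hub, show 1 / (1 - C₃) = C₃ / (1 - C₃) + 1 by field_simp; ring]
    simp only [add_sub_assoc, hc_def]
  subst hub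
  refine ⟨fun x hx => ?_, ?_, ?_, ?_, ?_⟩
  · have hx : 0 < (1 - C₃) * x + c := by
      have := mul_nonneg (sub_pos.mpr hC₃.2).le (sub_nonneg.mpr hx.1)
      linarith [mul_pos hs hC₄']
    rw [add_sub_assoc, ← hc_def]
    refine ⟨deriv_div_warpingProfile hC₂ hs hke hx, ?_⟩
    simpa only [sub_sub_cancel] using deriv_deriv_div_warpingProfile hC₂ hs hke hx
  · rw [warpingProfile_eq_of_eq_mul hs one_pos hgR, one_rpow, hs_def]
    field_simp
  · rw [deriv_warpingProfile_eq_of_eq_mul hs one_pos hke hgR, one_rpow, mul_one]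
  · rw [warpingProfile_eq_of_eq_mul hs hC₄' hgb, hC₄eq, ← hNl]
    field_simp
  · exact (deriv_warpingProfile_eq_of_eq_mul hs hC₄' hke hgb).trans hC₄eq

/-- properties of the warping function
`ū(x) = C₂ (t/(C₁C₂))^{-C₃/(1-C₃)} ((1-C₃)x + N/l - (1-C₃)b)^{1/(1-C₃)}` on `[b, R]`:
`ū'/ū = 1/((1-C₃)x + N/l - (1-C₃)b)`, `ū''/ū = C₃ (ū'/ū)²`, and the boundary values
`ū(R) = t/C₁`, `ū'(R) = C₂`, `ū(b) = 1/l`, `ū'(b) = 1/N`. -/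
theorem statement_15 (C₁ C₂ C₃ N C₄ t l b R : ℝ) (ub : ℝ → ℝ)
    (hC₁ : 0 < C₁) (hC₂ : C₂ ∈ Set.Ioo (0:ℝ) 1) (hC₃ : C₃ ∈ Set.Ioo (0:ℝ) 1)
    (hN : N > 1/C₂)
    (hC₄ : C₄ ∈ Set.Ioo (0:ℝ) 1)
    (hC₄eq : C₂ * (1 - C₄) ^ (C₃ / (1 - C₃)) = 1/N)
    (ht : 0 < t)
    (hl : l = C₁ * (N * C₂) ^ (1/C₃) / t)
    (hbR : b < R)
    (hRb : R - b = C₄ * t / (C₁ * C₂ * (1 - C₃)))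
    (hub : ub = fun x => C₂ * (t / (C₁ * C₂)) ^ (-(C₃ / (1 - C₃)))
      * ((1 - C₃) * x + N/l - (1 - C₃) * b) ^ (1 / (1 - C₃))) :
    (∀ x ∈ Set.Icc b R,
      deriv ub x / ub x = 1 / ((1 - C₃) * x + N/l - (1 - C₃) * b) ∧
      deriv (deriv ub) x / ub x = C₃ * (deriv ub x / ub x)^2) ∧
    ub R = t / C₁ ∧ deriv ub R = C₂ ∧ ub b = 1/l ∧ deriv ub b = 1/N :=
  statement_15_general C₁ C₂ C₃ N C₄ t l b R ub hC₁ hC₂ hC₃ hC₄ hC₄eq ht hl hRb hub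
end

section
/- Let m, n be integers with n ≥ m ≥ 2 and n ≥ 3, let N ≥ 5n be a real number, let l > 0, b ∈ [1/l, 2/l], and d ∈ (0, min(b, π/(2l))]. Define ū(x) = (1/l)·exp(l·(x² - b²)/(2Nb)) and ḡ(x) = sin(l·x)/l for x ∈ [0, d]. Then for every x ∈ [0, d]: (i) -m·ū''(x)/ū(x) - (n-1)·ḡ''(x)/ḡ(x) > 0 (for x ∈ (0,d], and in the limit at x = 0); (ii) (m-1)·(1 - ū'(x)²)/ū(x)² - ū''(x)/ū(x) - (n-1)·(ū'(x)/ū(x))·(ḡ'(x)/ḡ(x)) > 0; (iii) (n-2)·(1/ḡ(x)² - (ḡ'(x)/ḡ(x))²) - ḡ''(x)/ḡ(x) - m·(ū'(x)/ū(x))·(ḡ'(x)/ḡ(x)) > 0, where at x = 0 the quotient ḡ'/ḡ·ū'/ū is interpreted by its limit. In the course of the proof one has 0 < ū''/ū ≤ (1/N + 1/N²)·l², 0 ≤ ū' ≤ 1/N, ū ≤ 1/l, and ḡ''/ḡ = -l². -/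
/-!
With `a = l / (N b)` one has `ū'/ū = a x`, `ū''/ū = a + a² x²`, `ḡ''/ḡ = -l²`,
`1/ḡ² - (ḡ'/ḡ)² = l²` and `(ū'/ū)(ḡ'/ḡ) = a · (l x) cos (l x) / sin (l x)`, which is at most
`a` because `t cos t ≤ sin t` on `[0, π/2]` (equivalently `t ≤ tan t`). Since `l b ≥ 1`,
`a ≤ l²/N`, and `N ≥ 5n` makes every term coming from `ū` a small multiple of `l²`, dominated by
the `l²` terms coming from `ḡ`. As `x → 0⁺` the same quantities converge (with
`(l x) cos (l x) / sin (l x) → 1`), so the same estimates bound the limits.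
-/

open Real Filter

open Set Topology

noncomputable def warpU (l N b x : ℝ) : ℝ := 1 / l * exp (l * (x ^ 2 - b ^ 2) / (2 * N * b))

noncomputable def warpG (l x : ℝ) : ℝ := sin (l * x) / l

theorem mul_cos_le_sin {t : ℝ} (h0 : 0 ≤ t) (h : t ≤ π / 2) : t * cos t ≤ sin t := by
  rcases h.lt_or_eq with h | rfl
  · have hcos : 0 < cos t := cos_pos_of_mem_Ioo ⟨by linarith [pi_pos], h⟩
    have := le_tan h0 h
    rwa [tan_eq_sin_div_cos, le_div_iff₀ hcos] at this
  · simp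

theorem mul_cos_div_sin_le_one {t : ℝ} (h0 : 0 < t) (h : t ≤ π / 2) :
    t * cos t / sin t ≤ 1 :=
  div_le_one_of_le₀ (mul_cos_le_sin h0.le h)
    (sin_nonneg_of_nonneg_of_le_pi h0.le (by linarith [pi_pos]))

theorem tendsto_mul_cos_div_sin {l : ℝ} (hl : l ≠ 0) :
    Tendsto (fun x => l * x * cos (l * x) / sin (l * x)) (𝓝[≠] 0) (𝓝 1) := by
  have hcont : ContinuousAt (fun x => cos (l * x) / sinc (l * x)) 0 := by
    refine (by fun_prop : Continuous fun x => cos (l * x)).continuousAt.div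
      ((continuous_sinc.comp (continuous_const_mul l)).continuousAt) ?_
    simp [sinc_zero]
  have h := hcont.tendsto.mono_left (nhdsWithin_le_nhds (s := {0}ᶜ))
  simp only [mul_zero, cos_zero, sinc_zero, div_one] at h
  refine h.congr' (eventually_nhdsWithin_of_forall fun x hx => ?_)
  have hlx : l * x ≠ 0 := mul_ne_zero hl hx
  rw [sinc_of_ne_zero hlx, div_div_eq_mul_div, mul_comm]

section Warp

variable {l N b x : ℝ}

theorem hasDerivAt_warpU : HasDerivAt (warpU l N b) (l * x / (N * b) * warpU l N b x) x := by
  have h := ((((hasDerivAt_pow 2 x).sub_const (b ^ 2)).const_mul l).div_const (2 * N * b)).exp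
    |>.const_mul (1 / l)
  refine h.congr_deriv ?_
  simp only [warpU]
  field_simp
  ring

theorem deriv_warpU : deriv (warpU l N b) = fun x => l * x / (N * b) * warpU l N b x :=
  funext fun _ => hasDerivAt_warpU.deriv

theorem deriv_deriv_warpU :
    deriv (deriv (warpU l N b)) x = (l / (N * b) + (l * x / (N * b)) ^ 2) * warpU l N b x := by
  rw [deriv_warpU]
  have h : HasDerivAt (fun y => l * y / (N * b)) (l / (N * b)) x := by
    simpa using ((hasDerivAt_id x).const_mul l).div_const (N * b)
  rw [(h.fun_mul hasDerivAt_warpU).deriv]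
  ring

theorem warpU_pos (hl : 0 < l) : 0 < warpU l N b x := by
  unfold warpU
  positivity

theorem warpU_ne_zero (hl : l ≠ 0) : warpU l N b x ≠ 0 := by
  unfold warpU
  simp [hl, exp_ne_zero]

theorem continuous_warpU : Continuous (warpU l N b) := by
  unfold warpU
  fun_prop

theorem continuous_deriv_warpU : Continuous (deriv (warpU l N b)) := by
  rw [deriv_warpU]
  exact (by fun_prop : Continuous fun x : ℝ => l * x / (N * b)).mul continuous_warpU

theorem deriv_warpU_div (hl : l ≠ 0) :
    deriv (warpU l N b) x / warpU l N b x = l * x / (N * b) := by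
  rw [deriv_warpU, mul_div_assoc, div_self (warpU_ne_zero hl), mul_one]

theorem deriv_deriv_warpU_div (hl : l ≠ 0) :
    deriv (deriv (warpU l N b)) x / warpU l N b x = l / (N * b) + (l * x / (N * b)) ^ 2 := by
  rw [deriv_deriv_warpU, mul_div_assoc, div_self (warpU_ne_zero hl), mul_one]

theorem continuous_deriv_deriv_warpU_div (hl : l ≠ 0) :
    Continuous fun x => deriv (deriv (warpU l N b)) x / warpU l N b x := by
  simp only [deriv_deriv_warpU_div hl]
  fun_prop

theorem warpU_le_inv (hl : 0 < l) (hNb : 0 ≤ N * b) (hx : x ^ 2 ≤ b ^ 2) :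
    warpU l N b x ≤ 1 / l := by
  have hexp : l * (x ^ 2 - b ^ 2) / (2 * N * b) ≤ 0 :=
    div_nonpos_of_nonpos_of_nonneg (mul_nonpos_of_nonneg_of_nonpos hl.le (by linarith))
      (by linarith)
  calc warpU l N b x ≤ 1 / l * 1 :=
        mul_le_mul_of_nonneg_left (exp_le_one_iff.2 hexp) (by positivity)
    _ = 1 / l := mul_one _

theorem div_mul_le_sq_div (hl : 0 < l) (hN : 0 < N) (hlb : 1 ≤ l * b) :
    l / (N * b) ≤ l ^ 2 / N := by
  have hb : 0 < b := pos_of_mul_pos_right (one_pos.trans_le hlb) hl.le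
  rw [div_le_div_iff₀ (by positivity) hN]
  nlinarith [mul_pos hl hN]

theorem warpU_bounds (hl : 0 < l) (hN : 0 < N) (hlb : 1 ≤ l * b) (hx0 : 0 ≤ x) (hxb : x ≤ b) :
    0 < deriv (deriv (warpU l N b)) x / warpU l N b x ∧
    deriv (deriv (warpU l N b)) x / warpU l N b x ≤ (1 / N + 1 / N ^ 2) * l ^ 2 ∧
    0 ≤ deriv (warpU l N b) x ∧ deriv (warpU l N b) x ≤ 1 / N ∧
    warpU l N b x ≤ 1 / l := by
  have hb : 0 < b := pos_of_mul_pos_right (one_pos.trans_le hlb) hl.le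
  have ha := div_mul_le_sq_div hl hN hlb
  have hax : l * x / (N * b) ≤ l / N := by
    rw [div_le_div_iff₀ (by positivity) hN]
    nlinarith [mul_nonneg (mul_pos hl hN).le (sub_nonneg.2 hxb)]
  have hax0 : 0 ≤ l * x / (N * b) := by positivity
  have hu := warpU_le_inv (N := N) hl (by positivity) (pow_le_pow_left₀ hx0 hxb 2)
  rw [deriv_deriv_warpU_div hl.ne', deriv_warpU]
  refine ⟨by positivity, ?_, mul_nonneg hax0 (warpU_pos hl).le, ?_, hu⟩
  · calc l / (N * b) + (l * x / (N * b)) ^ 2 ≤ l ^ 2 / N + (l / N) ^ 2 :=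
          add_le_add ha (pow_le_pow_left₀ hax0 hax 2)
      _ = (1 / N + 1 / N ^ 2) * l ^ 2 := by ring
  · calc l * x / (N * b) * warpU l N b x ≤ l / N * (1 / l) :=
          mul_le_mul hax hu (warpU_pos hl).le (by positivity)
      _ = 1 / N := by field_simp

theorem deriv_warpG (hl : l ≠ 0) : deriv (warpG l) = fun x => cos (l * x) := by
  funext x
  have h := (((hasDerivAt_id x).const_mul l).sin).div_const l
  simp only [id, mul_one] at h
  exact (h.congr_deriv (by field_simp)).deriv

theorem deriv_deriv_warpG (hl : l ≠ 0) : deriv (deriv (warpG l)) x = -l ^ 2 * warpG l x := by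
  rw [deriv_warpG hl]
  have h := ((hasDerivAt_id x).const_mul l).cos
  simp only [id, mul_one] at h
  rw [h.deriv, warpG]
  field_simp

theorem deriv_deriv_warpG_div (hl : l ≠ 0) (hx : warpG l x ≠ 0) :
    deriv (deriv (warpG l)) x / warpG l x = -l ^ 2 := by
  rw [deriv_deriv_warpG hl, mul_div_assoc, div_self hx, mul_one]

theorem one_div_sq_sub_sq_deriv_warpG_div (hl : l ≠ 0) (hx : warpG l x ≠ 0) :
    1 / warpG l x ^ 2 - (deriv (warpG l) x / warpG l x) ^ 2 = l ^ 2 := by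
  have hs : sin (l * x) ≠ 0 := by simpa [warpG, hl] using hx
  rw [deriv_warpG hl, warpG]
  field_simp
  linear_combination (-1) * sin_sq_add_cos_sq (l * x)

theorem warpG_pos (hl : 0 < l) (hx : 0 < x) (hlx : l * x < π) : 0 < warpG l x :=
  div_pos (sin_pos_of_pos_of_lt_pi (mul_pos hl hx) hlx) hl

theorem deriv_warpU_div_mul_deriv_warpG_div (hl : l ≠ 0) :
    deriv (warpU l N b) x / warpU l N b x * (deriv (warpG l) x / warpG l x)
      = l / (N * b) * (l * x * cos (l * x) / sin (l * x)) := by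
  rw [deriv_warpU_div hl, deriv_warpG hl, warpG]
  by_cases hs : sin (l * x) = 0
  · simp [hs]
  · field_simp

theorem deriv_warpU_div_mul_deriv_warpG_div_le (hl : 0 < l) (hN : 0 < N) (hlb : 1 ≤ l * b)
    (hx : 0 < x) (hlx : l * x ≤ π / 2) :
    deriv (warpU l N b) x / warpU l N b x * (deriv (warpG l) x / warpG l x) ≤ l ^ 2 / N := by
  have hb : 0 < b := pos_of_mul_pos_right (one_pos.trans_le hlb) hl.le
  rw [deriv_warpU_div_mul_deriv_warpG_div hl.ne']
  calc l / (N * b) * (l * x * cos (l * x) / sin (l * x)) ≤ l / (N * b) * 1 := by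
        gcongr
        exact mul_cos_div_sin_le_one (mul_pos hl hx) hlx
    _ ≤ l ^ 2 / N := by rw [mul_one]; exact div_mul_le_sq_div hl hN hlb

theorem tendsto_deriv_warpU_div_mul_deriv_warpG_div (hl : l ≠ 0) :
    Tendsto (fun x => deriv (warpU l N b) x / warpU l N b x * (deriv (warpG l) x / warpG l x))
      (𝓝[≠] 0) (𝓝 (l / (N * b))) := by
  simp only [deriv_warpU_div_mul_deriv_warpG_div hl]
  simpa using (tendsto_mul_cos_div_sin hl).const_mul (l / (N * b))

theorem warpG_pos_of_mem_Ioo (hl : 0 < l) (hx : x ∈ Ioo 0 (π / l)) : 0 < warpG l x :=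
  warpG_pos hl hx.1 ((lt_div_iff₀' hl).1 hx.2)

theorem tendsto_deriv_deriv_warpG_div (hl : 0 < l) :
    Tendsto (fun x => deriv (deriv (warpG l)) x / warpG l x) (𝓝[>] 0) (𝓝 (-l ^ 2)) :=
  tendsto_const_nhds.congr' <| eventually_of_mem (Ioo_mem_nhdsGT (div_pos pi_pos hl)) fun _ hx =>
    (deriv_deriv_warpG_div hl.ne' (warpG_pos_of_mem_Ioo hl hx).ne').symm

theorem tendsto_one_div_sq_sub_sq_deriv_warpG_div (hl : 0 < l) :
    Tendsto (fun x => 1 / warpG l x ^ 2 - (deriv (warpG l) x / warpG l x) ^ 2) (𝓝[>] 0)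
      (𝓝 (l ^ 2)) :=
  tendsto_const_nhds.congr' <| eventually_of_mem (Ioo_mem_nhdsGT (div_pos pi_pos hl)) fun _ hx =>
    (one_div_sq_sub_sq_deriv_warpG_div hl.ne' (warpG_pos_of_mem_Ioo hl hx).ne').symm

end Warp

section RicciArith

/- The curvature estimates, for abstract values `A = u''/u`, `G = g''/g`, `I = 1/g² - (g'/g)²`,
`P = (u'/u)(g'/g)` and `v = u'`, so that they apply both at `x > 0` and to the limits at `0⁺`. -/

variable {m n N l A G I P u v : ℝ}

theorem mul_div_le_one_fifth_mul (hn : 0 ≤ n) (hN : 5 * n ≤ N) (c : ℝ) (hc : 0 ≤ c) :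
    n * (c / N) ≤ 1 / 5 * c := by
  rcases hn.eq_or_lt with rfl | hn
  · simp [hc]
  rw [mul_div_assoc', div_le_iff₀ (by linarith)]
  nlinarith

theorem mul_inv_add_inv_sq_le (hn : 3 ≤ n) (hN : 5 * n ≤ N) :
    n * (1 / N + 1 / N ^ 2) ≤ 16 / 75 := by
  have hN0 : 0 < N := by linarith
  have h1 := mul_div_le_one_fifth_mul (by linarith) hN 1 zero_le_one
  have h2 : 1 / N ≤ 1 / 15 := by rw [div_le_div_iff₀ hN0 (by norm_num)]; linarith
  have h3 : n * (1 / N ^ 2) = n * (1 / N) * (1 / N) := by ring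
  have h4 : 0 ≤ n * (1 / N) := by positivity
  nlinarith

theorem ricciT_pos_of_bounds (hmn : m ≤ n) (hn : 3 ≤ n) (hN : 5 * n ≤ N) (hl : l ≠ 0)
    (hA0 : 0 ≤ A) (hA : A ≤ (1 / N + 1 / N ^ 2) * l ^ 2) (hG : G = -l ^ 2) :
    -m * A - (n - 1) * G > 0 := by
  have hl2 : 0 < l ^ 2 := by positivity
  have hmA : m * A ≤ 16 / 75 * l ^ 2 :=
    calc m * A ≤ n * ((1 / N + 1 / N ^ 2) * l ^ 2) := mul_le_mul hmn hA hA0 (by linarith)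
      _ = n * (1 / N + 1 / N ^ 2) * l ^ 2 := by ring
      _ ≤ 16 / 75 * l ^ 2 := by gcongr; exact mul_inv_add_inv_sq_le hn hN
  rw [hG]
  nlinarith

theorem ricciTheta_pos_of_bounds (hm : 2 ≤ m) (hn : 3 ≤ n) (hN : 5 * n ≤ N) (hl : 0 < l)
    (hA : A ≤ (1 / N + 1 / N ^ 2) * l ^ 2) (hP : P ≤ l ^ 2 / N) (hu0 : 0 < u) (hu : u ≤ 1 / l)
    (hv0 : 0 ≤ v) (hv : v ≤ 1 / N) :
    (m - 1) * (1 - v ^ 2) / u ^ 2 - A - (n - 1) * P > 0 := by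
  have hN15 : 5 * 3 ≤ N := by linarith
  have hv2 : v ^ 2 ≤ 1 / 225 :=
    calc v ^ 2 ≤ (1 / N) ^ 2 := pow_le_pow_left₀ hv0 hv 2
      _ ≤ (1 / 15) ^ 2 := by
          gcongr
          linarith
      _ = 1 / 225 := by norm_num
  have hlu : l ^ 2 ≤ 1 / u ^ 2 := by
    rw [le_div_iff₀ (by positivity), ← mul_pow]
    exact pow_le_one₀ (by positivity) (by rwa [le_div_iff₀' hl] at hu)
  have h1 : 224 / 225 * l ^ 2 ≤ (m - 1) * (1 - v ^ 2) / u ^ 2 :=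
    calc 224 / 225 * l ^ 2 ≤ (m - 1) * (1 - v ^ 2) * l ^ 2 := by gcongr; nlinarith
      _ ≤ (m - 1) * (1 - v ^ 2) * (1 / u ^ 2) := by gcongr; nlinarith
      _ = (m - 1) * (1 - v ^ 2) / u ^ 2 := by ring
  have h2 : 3 * A ≤ 16 / 75 * l ^ 2 :=
    calc 3 * A ≤ 3 * ((1 / N + 1 / N ^ 2) * l ^ 2) := by linarith
      _ = 3 * (1 / N + 1 / N ^ 2) * l ^ 2 := by ring
      _ ≤ 16 / 75 * l ^ 2 := by gcongr; exact mul_inv_add_inv_sq_le le_rfl hN15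
  have hc : 0 ≤ l ^ 2 / N := div_nonneg (sq_nonneg l) (by linarith)
  have h3 : (n - 1) * P ≤ 1 / 5 * l ^ 2 :=
    calc (n - 1) * P ≤ (n - 1) * (l ^ 2 / N) := by gcongr; linarith
      _ ≤ n * (l ^ 2 / N) := mul_le_mul_of_nonneg_right (by linarith) hc
      _ ≤ 1 / 5 * l ^ 2 := mul_div_le_one_fifth_mul (by linarith) hN _ (sq_nonneg l)
  nlinarith [pow_pos hl 2]

theorem ricciSigma_pos_of_bounds (hm : 0 ≤ m) (hmn : m ≤ n) (hn : 3 ≤ n) (hN : 5 * n ≤ N)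
    (hl : l ≠ 0) (hP : P ≤ l ^ 2 / N) (hG : G = -l ^ 2) (hI : I = l ^ 2) :
    (n - 2) * I - G - m * P > 0 := by
  have hl2 : 0 < l ^ 2 := by positivity
  have h : m * P ≤ 1 / 5 * l ^ 2 :=
    calc m * P ≤ m * (l ^ 2 / N) := by gcongr
      _ ≤ n * (l ^ 2 / N) := mul_le_mul_of_nonneg_right hmn (div_nonneg hl2.le (by linarith))
      _ ≤ 1 / 5 * l ^ 2 := mul_div_le_one_fifth_mul (by linarith) hN _ hl2.le
  rw [hG, hI]
  nlinarith

end RicciArith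

/- `Ric(T,T)`, `Ric(Θ,Θ)`, `Ric(Σ,Σ)` of `dx² + u(x)² dθ²_{S^m} + g(x)² dσ²_{S^{n-1}}`. -/
noncomputable def ricciT (m n : ℝ) (u g : ℝ → ℝ) (x : ℝ) : ℝ :=
  -m * (deriv (deriv u) x / u x) - (n - 1) * (deriv (deriv g) x / g x)

noncomputable def ricciTheta (m n : ℝ) (u g : ℝ → ℝ) (x : ℝ) : ℝ :=
  (m - 1) * (1 - deriv u x ^ 2) / u x ^ 2 - deriv (deriv u) x / u x
    - (n - 1) * (deriv u x / u x) * (deriv g x / g x)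

noncomputable def ricciSigma (m n : ℝ) (u g : ℝ → ℝ) (x : ℝ) : ℝ :=
  (n - 2) * (1 / g x ^ 2 - (deriv g x / g x) ^ 2) - deriv (deriv g) x / g x
    - m * (deriv u x / u x) * (deriv g x / g x)

section RicciLimits

variable {m n l N b : ℝ}

theorem tendsto_ricciT_warp (hl : 0 < l) :
    Tendsto (ricciT m n (warpU l N b) (warpG l)) (𝓝[>] 0)
      (𝓝 (-m * (deriv (deriv (warpU l N b)) 0 / warpU l N b 0) - (n - 1) * -l ^ 2)) :=
  ((continuous_deriv_deriv_warpU_div hl.ne').continuousWithinAt.tendsto.const_mul _).sub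
    ((tendsto_deriv_deriv_warpG_div hl).const_mul _)

theorem tendsto_ricciTheta_warp (hl : 0 < l) :
    Tendsto (ricciTheta m n (warpU l N b) (warpG l)) (𝓝[>] 0)
      (𝓝 ((m - 1) * (1 - deriv (warpU l N b) 0 ^ 2) / warpU l N b 0 ^ 2
        - deriv (deriv (warpU l N b)) 0 / warpU l N b 0 - (n - 1) * (l / (N * b)))) := by
  have hu : ContinuousWithinAt (warpU l N b) (Ioi 0) 0 := continuous_warpU.continuousWithinAt
  have hu' : ContinuousWithinAt (deriv (warpU l N b)) (Ioi 0) 0 :=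
    continuous_deriv_warpU.continuousWithinAt
  have hA : ContinuousWithinAt (fun x => deriv (deriv (warpU l N b)) x / warpU l N b x) (Ioi 0) 0 :=
    (continuous_deriv_deriv_warpU_div hl.ne').continuousWithinAt
  have hP := (tendsto_deriv_warpU_div_mul_deriv_warpG_div (N := N) (b := b) hl.ne').mono_left
    (nhdsGT_le_nhdsNE 0)
  refine (((((hu'.tendsto.pow 2).const_sub 1).const_mul _).div (hu.tendsto.pow 2)
    (pow_pos (warpU_pos hl) 2).ne').sub hA.tendsto).sub (hP.const_mul _) |>.congr fun x => ?_
  simp only [ricciTheta, Pi.div_apply]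
  ring

theorem tendsto_ricciSigma_warp (hl : 0 < l) :
    Tendsto (ricciSigma m n (warpU l N b) (warpG l)) (𝓝[>] 0)
      (𝓝 ((n - 2) * l ^ 2 - -l ^ 2 - m * (l / (N * b)))) := by
  have hP := (tendsto_deriv_warpU_div_mul_deriv_warpG_div (N := N) (b := b) hl.ne').mono_left
    (nhdsGT_le_nhdsNE 0)
  refine ((tendsto_one_div_sq_sub_sq_deriv_warpG_div hl).const_mul _).sub
    (tendsto_deriv_deriv_warpG_div hl) |>.sub (hP.const_mul _) |>.congr fun x => ?_
  simp only [ricciSigma]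
  ring

end RicciLimits

section RicciWarp

variable {m n l N b x : ℝ}

theorem ricci_warp_pos (hm : 2 ≤ m) (hmn : m ≤ n) (hn : 3 ≤ n) (hN : 5 * n ≤ N) (hl : 0 < l)
    (hlb : 1 ≤ l * b) (hx : 0 < x) (hxb : x ≤ b) (hlx : l * x ≤ π / 2) :
    ricciT m n (warpU l N b) (warpG l) x > 0 ∧ ricciTheta m n (warpU l N b) (warpG l) x > 0 ∧
      ricciSigma m n (warpU l N b) (warpG l) x > 0 := by
  have hN0 : 0 < N := by linarith
  obtain ⟨hA0, hA, hv0, hv, hu⟩ := warpU_bounds (N := N) hl hN0 hlb hx.le hxb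
  have hP := deriv_warpU_div_mul_deriv_warpG_div_le hl hN0 hlb hx hlx
  have hg : warpG l x ≠ 0 := (warpG_pos hl hx (by linarith [pi_pos])).ne'
  have hG := deriv_deriv_warpG_div hl.ne' hg
  refine ⟨ricciT_pos_of_bounds hmn hn hN hl.ne' hA0.le hA hG, ?_, ?_⟩
  · simpa only [ricciTheta, mul_assoc] using
      ricciTheta_pos_of_bounds hm hn hN hl hA hP (warpU_pos hl) hu hv0 hv
  · simpa only [ricciSigma, mul_assoc] using ricciSigma_pos_of_bounds (by linarith) hmn hn hN
      hl.ne' hP hG (one_div_sq_sub_sq_deriv_warpG_div hl.ne' hg)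

theorem ricci_warp_limits_pos (hm : 2 ≤ m) (hmn : m ≤ n) (hn : 3 ≤ n) (hN : 5 * n ≤ N)
    (hl : 0 < l) (hlb : 1 ≤ l * b) :
    (∃ L > 0, Tendsto (ricciT m n (warpU l N b) (warpG l)) (𝓝[>] 0) (𝓝 L)) ∧
    (∃ L > 0, Tendsto (ricciTheta m n (warpU l N b) (warpG l)) (𝓝[>] 0) (𝓝 L)) ∧
    (∃ L > 0, Tendsto (ricciSigma m n (warpU l N b) (warpG l)) (𝓝[>] 0) (𝓝 L)) := by
  have hN0 : 0 < N := by linarith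
  have hb : 0 < b := pos_of_mul_pos_right (one_pos.trans_le hlb) hl.le
  obtain ⟨hA0, hA, hv0, hv, hu⟩ := warpU_bounds (N := N) hl hN0 hlb le_rfl hb.le
  have ha := div_mul_le_sq_div hl hN0 hlb
  exact ⟨⟨_, ricciT_pos_of_bounds hmn hn hN hl.ne' hA0.le hA rfl, tendsto_ricciT_warp hl⟩,
    ⟨_, ricciTheta_pos_of_bounds hm hn hN hl hA ha (warpU_pos hl) hu hv0 hv,
      tendsto_ricciTheta_warp hl⟩,
    ⟨_, ricciSigma_pos_of_bounds (by linarith) hmn hn hN hl.ne' ha rfl rfl,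
      tendsto_ricciSigma_warp hl⟩⟩

end RicciWarp

theorem statement_16_general (m n : ℕ) (hm : 2 ≤ m) (hmn : m ≤ n) (hn : 3 ≤ n)
    (N l b d : ℝ) (ub gb : ℝ → ℝ)
    (hN : 5 * (n : ℝ) ≤ N) (hl : 0 < l)
    (hb : b ∈ Set.Icc (1/l) (2/l))
    (hd' : d ≤ min b (π / (2 * l)))
    (hub : ub = fun x => (1/l) * Real.exp (l * (x^2 - b^2) / (2 * N * b)))
    (hgb : gb = fun x => Real.sin (l * x) / l) :
    -- (i), (ii), (iii) for `x ∈ (0, d]`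
    (∀ x ∈ Set.Ioc 0 d,
      -(m : ℝ) * (deriv (deriv ub) x / ub x)
        - ((n : ℝ) - 1) * (deriv (deriv gb) x / gb x) > 0 ∧
      ((m : ℝ) - 1) * (1 - (deriv ub x)^2) / (ub x)^2 - deriv (deriv ub) x / ub x
        - ((n : ℝ) - 1) * (deriv ub x / ub x) * (deriv gb x / gb x) > 0 ∧
      ((n : ℝ) - 2) * (1 / (gb x)^2 - (deriv gb x / gb x)^2)
        - deriv (deriv gb) x / gb x
        - (m : ℝ) * (deriv ub x / ub x) * (deriv gb x / gb x) > 0) ∧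
    -- (i), (ii), (iii) hold in the limit at `x = 0`
    (∃ L₁ > (0:ℝ), Tendsto (fun x => -(m : ℝ) * (deriv (deriv ub) x / ub x)
        - ((n : ℝ) - 1) * (deriv (deriv gb) x / gb x))
      (nhdsWithin 0 (Set.Ioi 0)) (nhds L₁)) ∧
    (∃ L₂ > (0:ℝ), Tendsto (fun x => ((m : ℝ) - 1) * (1 - (deriv ub x)^2) / (ub x)^2
        - deriv (deriv ub) x / ub x
        - ((n : ℝ) - 1) * (deriv ub x / ub x) * (deriv gb x / gb x))
      (nhdsWithin 0 (Set.Ioi 0)) (nhds L₂)) ∧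
    (∃ L₃ > (0:ℝ), Tendsto (fun x => ((n : ℝ) - 2) * (1 / (gb x)^2 - (deriv gb x / gb x)^2)
        - deriv (deriv gb) x / gb x
        - (m : ℝ) * (deriv ub x / ub x) * (deriv gb x / gb x))
      (nhdsWithin 0 (Set.Ioi 0)) (nhds L₃)) ∧
    -- the auxiliary bounds from the proof
    (∀ x ∈ Set.Icc 0 d,
      0 < deriv (deriv ub) x / ub x ∧
      deriv (deriv ub) x / ub x ≤ (1/N + 1/N^2) * l^2 ∧
      0 ≤ deriv ub x ∧ deriv ub x ≤ 1/N ∧ ub x ≤ 1/l) ∧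
    (∀ x ∈ Set.Ioc 0 d, deriv (deriv gb) x / gb x = -l^2) := by
  obtain ⟨hb1, -⟩ := hb
  have hu : ub = warpU l N b := hub
  have hg : gb = warpG l := hgb
  subst hu hg
  have hm' : (2 : ℝ) ≤ m := by exact_mod_cast hm
  have hmn' : (m : ℝ) ≤ n := by exact_mod_cast hmn
  have hn' : (3 : ℝ) ≤ n := by exact_mod_cast hn
  have hlb : 1 ≤ l * b := by rwa [div_le_iff₀ hl, mul_comm] at hb1
  have hdb : d ≤ b := hd'.trans (min_le_left _ _)
  have hlx : ∀ x ∈ Ioc 0 d, l * x ≤ π / 2 := fun x hx => by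
    have := (hx.2.trans hd').trans (min_le_right _ _)
    rw [le_div_iff₀ (by positivity)] at this
    linarith
  obtain ⟨hT, hTheta, hSigma⟩ := ricci_warp_limits_pos (N := N) hm' hmn' hn' hN hl hlb
  exact ⟨fun x hx => ricci_warp_pos hm' hmn' hn' hN hl hlb hx.1 (hx.2.trans hdb) (hlx x hx),
    hT, hTheta, hSigma, fun x hx => warpU_bounds hl (by linarith) hlb hx.1 (hx.2.trans hdb),
    fun x hx => deriv_deriv_warpG_div hl.ne'
      (warpG_pos hl hx.1 (by linarith [hlx x hx, pi_pos])).ne'⟩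

/-- on the innermost interval `[0,d]` of the pieces `P_i`, with
`ū(x) = (1/l) exp(l(x²-b²)/(2Nb))` and `ḡ(x) = sin(lx)/l`, the three Ricci curvatures
`Ric(T,T)`, `Ric(Θ,Θ)`, `Ric(Σ,Σ)` are positive for `x ∈ (0,d]` and in the limit at
`x = 0`; in the course of the proof one has `0 < ū''/ū ≤ (1/N+1/N²)l²`, `0 ≤ ū' ≤ 1/N`,
`ū ≤ 1/l` and `ḡ''/ḡ = -l²`. -/
theorem statement_16 (m n : ℕ) (hm : 2 ≤ m) (hmn : m ≤ n) (hn : 3 ≤ n)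
    (N l b d : ℝ) (ub gb : ℝ → ℝ)
    (hN : 5 * (n : ℝ) ≤ N) (hl : 0 < l)
    (hb : b ∈ Set.Icc (1/l) (2/l))
    (hd : 0 < d) (hd' : d ≤ min b (π / (2 * l)))
    (hub : ub = fun x => (1/l) * Real.exp (l * (x^2 - b^2) / (2 * N * b)))
    (hgb : gb = fun x => Real.sin (l * x) / l) :
    -- (i), (ii), (iii) for `x ∈ (0, d]`
    (∀ x ∈ Set.Ioc 0 d,
      -(m : ℝ) * (deriv (deriv ub) x / ub x)
        - ((n : ℝ) - 1) * (deriv (deriv gb) x / gb x) > 0 ∧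
      ((m : ℝ) - 1) * (1 - (deriv ub x)^2) / (ub x)^2 - deriv (deriv ub) x / ub x
        - ((n : ℝ) - 1) * (deriv ub x / ub x) * (deriv gb x / gb x) > 0 ∧
      ((n : ℝ) - 2) * (1 / (gb x)^2 - (deriv gb x / gb x)^2)
        - deriv (deriv gb) x / gb x
        - (m : ℝ) * (deriv ub x / ub x) * (deriv gb x / gb x) > 0) ∧
    -- (i), (ii), (iii) hold in the limit at `x = 0`
    (∃ L₁ > (0:ℝ), Tendsto (fun x => -(m : ℝ) * (deriv (deriv ub) x / ub x)
        - ((n : ℝ) - 1) * (deriv (deriv gb) x / gb x))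
      (nhdsWithin 0 (Set.Ioi 0)) (nhds L₁)) ∧
    (∃ L₂ > (0:ℝ), Tendsto (fun x => ((m : ℝ) - 1) * (1 - (deriv ub x)^2) / (ub x)^2
        - deriv (deriv ub) x / ub x
        - ((n : ℝ) - 1) * (deriv ub x / ub x) * (deriv gb x / gb x))
      (nhdsWithin 0 (Set.Ioi 0)) (nhds L₂)) ∧
    (∃ L₃ > (0:ℝ), Tendsto (fun x => ((n : ℝ) - 2) * (1 / (gb x)^2 - (deriv gb x / gb x)^2)
        - deriv (deriv gb) x / gb x
        - (m : ℝ) * (deriv ub x / ub x) * (deriv gb x / gb x))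
      (nhdsWithin 0 (Set.Ioi 0)) (nhds L₃)) ∧
    -- the auxiliary bounds from the proof
    (∀ x ∈ Set.Icc 0 d,
      0 < deriv (deriv ub) x / ub x ∧
      deriv (deriv ub) x / ub x ≤ (1/N + 1/N^2) * l^2 ∧
      0 ≤ deriv ub x ∧ deriv ub x ≤ 1/N ∧ ub x ≤ 1/l) ∧
    (∀ x ∈ Set.Ioc 0 d, deriv (deriv gb) x / gb x = -l^2) :=
  statement_16_general m n hm hmn hn N l b d ub gb hN hl hb hd' hub hgb
end

section
/- Let m, n be integers with n ≥ m ≥ 2, let 0 < γ < 1, and let N be a real number with 1/N + 1/N² < γ(1-γ)/8. Let l > 0, b ∈ [1/l, 2/l], A > 0, B ≤ 0, and d ∈ (0, b) such that A·x^γ + B > 0 for all x ∈ [d, b]. Suppose ū is a positive twice-differentiable function on [d, b] with 0 < ū''(x)/ū(x) ≤ (1/N + 1/N²)·l², and set ḡ(x) = A·x^γ + B. Then -m·ū''(x)/ū(x) - (n-1)·ḡ''(x)/ḡ(x) > 0 for all x ∈ [d, b]. -/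
/-!
For `ḡ = A x^γ + B` one has `-ḡ''/ḡ = γ(1-γ)/x² · A x^γ/ḡ ≥ γ(1-γ)/x²` because `B ≤ 0`, and
`x ≤ b ≤ 2/l` turns this into `γ(1-γ) l²/4`. On the other side `m ū''/ū < m γ(1-γ) l²/8`, and
`m ≤ 2(n-1)` because `2 ≤ m ≤ n`.
-/

open Real

theorem deriv_deriv_const_mul_rpow_add_const (A B γ x : ℝ) :
    deriv (deriv fun y => A * y ^ γ + B) x = A * γ * (γ - 1) * x ^ (γ - 2) := by
  rw [deriv_add_const', deriv_const_mul_field', deriv_rpow_const', deriv_const_mul_field,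
    deriv_const_mul_field, Real.deriv_rpow_const]
  ring_nf

theorem div_sq_le_neg_deriv_deriv_div {A B γ x : ℝ} (hγ₀ : 0 ≤ γ) (hγ₁ : γ ≤ 1) (hB : B ≤ 0)
    (hx : 0 < x) (hg : 0 < A * x ^ γ + B) :
    γ * (1 - γ) / x ^ 2 ≤ -(deriv (deriv fun y => A * y ^ γ + B) x / (A * x ^ γ + B)) := by
  have hratio : 1 ≤ A * x ^ γ / (A * x ^ γ + B) := by
    rw [one_le_div hg]; linarith
  calc γ * (1 - γ) / x ^ 2 ≤ γ * (1 - γ) / x ^ 2 * (A * x ^ γ / (A * x ^ γ + B)) :=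
        le_mul_of_one_le_right (by positivity) hratio
    _ = _ := by
      rw [deriv_deriv_const_mul_rpow_add_const, rpow_sub hx, rpow_two]
      ring

theorem statement_17_general (m n : ℕ) (hm : 2 ≤ m) (hmn : m ≤ n)
    (γ N l b A B d : ℝ) (ub gb : ℝ → ℝ)
    (hγ : 0 < γ) (hγ' : γ < 1)
    (hNγ : 1/N + 1/N^2 < γ * (1 - γ) / 8)
    (hl : 0 < l) (hb : b ∈ Set.Icc (1/l) (2/l))
    (hB : B ≤ 0)
    (hd : d ∈ Set.Ioo 0 b)
    (hgpos : ∀ x ∈ Set.Icc d b, 0 < A * x ^ γ + B)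
    (hgb : gb = fun x => A * x ^ γ + B)
    (hub : ∀ x ∈ Set.Icc d b,
      0 < deriv (deriv ub) x / ub x ∧
      deriv (deriv ub) x / ub x ≤ (1/N + 1/N^2) * l^2) :
    ∀ x ∈ Set.Icc d b,
      -(m : ℝ) * (deriv (deriv ub) x / ub x)
        - ((n : ℝ) - 1) * (deriv (deriv gb) x / gb x) > 0 := by
  subst hgb
  intro x hx
  have hx₀ : 0 < x := hd.1.trans_le hx.1
  have hm₀ : (0 : ℝ) < m := by positivity
  have hm₂ : (m : ℝ) ≤ 2 * ((n : ℝ) - 1) := by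
    have : (2 : ℝ) ≤ m := by exact_mod_cast hm
    have : (m : ℝ) ≤ n := by exact_mod_cast hmn
    linarith
  have hub_lt : deriv (deriv ub) x / ub x < γ * (1 - γ) / 8 * l ^ 2 :=
    (hub x hx).2.trans_lt (mul_lt_mul_of_pos_right hNγ (by positivity))
  have hsq : l ^ 2 / 4 ≤ 1 / x ^ 2 := by
    have hxl : x * l ≤ 2 := (le_div_iff₀ hl).1 (hx.2.trans hb.2)
    rw [div_le_div_iff₀ (by norm_num) (by positivity)]
    nlinarith [mul_pos hx₀ hl]
  have hg_curv := div_sq_le_neg_deriv_deriv_div hγ.le hγ'.le hB hx₀ (hgpos x hx)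
  have : (m : ℝ) * (deriv (deriv ub) x / ub x) <
      ((n : ℝ) - 1) * -(deriv (deriv fun y => A * y ^ γ + B) x / (A * x ^ γ + B)) :=
    calc (m : ℝ) * (deriv (deriv ub) x / ub x) < m * (γ * (1 - γ) / 8 * l ^ 2) :=
          mul_lt_mul_of_pos_left hub_lt hm₀
      _ ≤ 2 * ((n : ℝ) - 1) * (γ * (1 - γ) / 8 * l ^ 2) :=
          mul_le_mul_of_nonneg_right hm₂ (by positivity)
      _ = ((n : ℝ) - 1) * (γ * (1 - γ) * (l ^ 2 / 4)) := by ring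
      _ ≤ ((n : ℝ) - 1) * (γ * (1 - γ) * (1 / x ^ 2)) := by gcongr; linarith
      _ = ((n : ℝ) - 1) * (γ * (1 - γ) / x ^ 2) := by rw [mul_one_div]
      _ ≤ _ := mul_le_mul_of_nonneg_left hg_curv (by linarith)
  linarith

/-- positivity of `Ric(T,T)` on the middle interval `[d,b]` of the pieces
`P_i`: with `ḡ(x) = A x^γ + B > 0` and a positive twice-differentiable `ū` satisfying
`0 < ū''/ū ≤ (1/N + 1/N²) l²`, one has `-m ū''/ū - (n-1) ḡ''/ḡ > 0` on `[d,b]`,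
provided `1/N + 1/N² < γ(1-γ)/8`. -/
theorem statement_17 (m n : ℕ) (hm : 2 ≤ m) (hmn : m ≤ n)
    (γ N l b A B d : ℝ) (ub gb : ℝ → ℝ)
    (hγ : 0 < γ) (hγ' : γ < 1)
    (hNγ : 1/N + 1/N^2 < γ * (1 - γ) / 8)
    (hl : 0 < l) (hb : b ∈ Set.Icc (1/l) (2/l))
    (hA : 0 < A) (hB : B ≤ 0)
    (hd : d ∈ Set.Ioo 0 b)
    (hgpos : ∀ x ∈ Set.Icc d b, 0 < A * x ^ γ + B)
    (hgb : gb = fun x => A * x ^ γ + B)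
    (hubsmooth : ContDiffOn ℝ 2 ub (Set.Icc d b))
    (hubpos : ∀ x ∈ Set.Icc d b, 0 < ub x)
    (hub : ∀ x ∈ Set.Icc d b,
      0 < deriv (deriv ub) x / ub x ∧
      deriv (deriv ub) x / ub x ≤ (1/N + 1/N^2) * l^2) :
    ∀ x ∈ Set.Icc d b,
      -(m : ℝ) * (deriv (deriv ub) x / ub x)
        - ((n : ℝ) - 1) * (deriv (deriv gb) x / gb x) > 0 :=
  statement_17_general m n hm hmn γ N l b A B d ub gb hγ hγ' hNγ hl hb hB hd hgpos hgb hub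
end

section
/- Let m, n be integers with n ≥ m ≥ 2 and n ≥ 3, let 0 < γ < 1/4 and N ≥ 5n. Let l > 0, b ∈ [1/l, 2/l], A > 0, and d ∈ (0, b) with l·d ∈ (0, π/2) and d^{1-γ}·cos(l·d) = γ·A. Set B = sin(l·d)/l - A·d^γ and suppose B ≤ 0 and A·x^γ + B > 0 on [d, b]. Set ḡ(x) = A·x^γ + B on [d, b], and let ū be positive on [d, b] with ū'(x)/ū(x) = l·x/(Nb). Then for every x ∈ [d, b]: (n-2)·(1/ḡ(x)² - (ḡ'(x)/ḡ(x))²) - ḡ''(x)/ḡ(x) - m·(ū'(x)/ū(x))·(ḡ'(x)/ḡ(x)) > 0. In the course of the proof, ḡ'(x) = γ·A·x^{γ-1} ≤ cos(l·d) < 1 on [d, b]. -/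
/-!
On `[d, b]` the slope `ḡ' = γ A x^{γ-1}` is decreasing and equals `cos (l d) < 1` at `x = d`
(this is what the choice of `d` encodes), so the term `(n - 2) (1 - ḡ'²) / ḡ²` is nonnegative.
The remaining terms combine to `γ A x^{γ-2} ((1 - γ) - m l x² / (N b)) / ḡ`, positive because
`m l x² / (N b) ≤ 2 m / N ≤ 2 / 5 < 1 - γ`.
-/

open Real

/-- `Ric(Σ, Σ)` for `dx² + u² dθ² + g² dσ²` on `S^m × D^n`, in terms of `g, g', g''` and
`h = u'/u`. -/
noncomputable def ricciSphereDir (n m g g' g'' h : ℝ) : ℝ :=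
  (n - 2) * (1 / g ^ 2 - (g' / g) ^ 2) - g'' / g - m * h * (g' / g)

theorem ricciSphereDir_pos {n m g g' g'' h : ℝ} (hn : 2 ≤ n) (hg : 0 < g)
    (hg'₀ : 0 ≤ g') (hg'₁ : g' ≤ 1) (hdom : m * h * g' < -g'') :
    0 < ricciSphereDir n m g g' g'' h := by
  have hsphere : 0 ≤ (n - 2) * (1 / g ^ 2 - (g' / g) ^ 2) := by
    rw [div_pow, ← sub_div]
    exact mul_nonneg (by linarith) (div_nonneg (by nlinarith) (by positivity))
  have hrest : 0 < -g'' / g - m * h * (g' / g) := by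
    rw [mul_div_assoc', ← sub_div]
    exact div_pos (by linarith) hg
  unfold ricciSphereDir
  linarith [neg_div g g'']

section PowerWarping

variable {A B γ x : ℝ}

theorem hasDerivAt_mul_rpow_add_const (hx : 0 < x) :
    HasDerivAt (fun z => A * z ^ γ + B) (γ * A * x ^ (γ - 1)) x :=
  (((hasDerivAt_rpow_const (Or.inl hx.ne')).const_mul A).add_const B).congr_deriv (by ring)

theorem deriv_mul_rpow_add_const (hx : 0 < x) :
    deriv (fun z => A * z ^ γ + B) x = γ * A * x ^ (γ - 1) :=
  (hasDerivAt_mul_rpow_add_const hx).deriv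

theorem deriv_deriv_mul_rpow_add_const (hx : 0 < x) :
    deriv (deriv fun z => A * z ^ γ + B) x = γ * (γ - 1) * A * x ^ (γ - 2) := by
  have hderiv : deriv (fun z => A * z ^ γ + B) =ᶠ[nhds x] fun y => γ * A * y ^ (γ - 1) := by
    filter_upwards [eventually_gt_nhds hx] with y hy using deriv_mul_rpow_add_const hy
  rw [hderiv.deriv_eq]
  exact (((hasDerivAt_rpow_const (Or.inl hx.ne')).const_mul (γ * A)).congr_deriv
    (by ring_nf)).deriv

theorem mul_rpow_sub_one_le_of_eq {a c d : ℝ} (hd : 0 < d) (hdx : d ≤ x) (hγ : γ ≤ 1)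
    (hc : 0 ≤ c) (hdc : d ^ (1 - γ) * c = a) : a * x ^ (γ - 1) ≤ c := by
  calc a * x ^ (γ - 1) ≤ a * d ^ (γ - 1) := by
        rw [← hdc]
        exact mul_le_mul_of_nonneg_left (rpow_le_rpow_of_nonpos hd hdx (by linarith))
          (mul_nonneg (rpow_nonneg hd.le _) hc)
    _ = c := by rw [← hdc, mul_right_comm, ← rpow_add hd]; simp

theorem mul_slope_lt_neg_second_deriv {s : ℝ} (hγ : 0 < γ) (hA : 0 < A) (hx : 0 < x)
    (hs : s * x < 1 - γ) : s * (γ * A * x ^ (γ - 1)) < -(γ * (γ - 1) * A * x ^ (γ - 2)) := by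
  have hsplit : x ^ (γ - 1) = x ^ (γ - 2) * x := by
    rw [← rpow_add_one hx.ne']
    ring_nf
  have hcoef : 0 < γ * A * x ^ (γ - 2) := by positivity
  calc s * (γ * A * x ^ (γ - 1)) = γ * A * x ^ (γ - 2) * (s * x) := by rw [hsplit]; ring
    _ < γ * A * x ^ (γ - 2) * (1 - γ) := mul_lt_mul_of_pos_left hs hcoef
    _ = -(γ * (γ - 1) * A * x ^ (γ - 2)) := by ring

end PowerWarping

theorem mul_log_deriv_mul_le {m n N l b x : ℝ} (hm : 0 ≤ m) (hmn : m ≤ n) (hN : 5 * n ≤ N)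
    (hN₀ : 0 < N) (hl : 0 < l) (hlb : l * b ≤ 2) (hx : 0 < x) (hxb : x ≤ b) :
    m * (l * x / (N * b)) * x ≤ 2 / 5 := by
  have hb : 0 < b := hx.trans_le hxb
  rw [show m * (l * x / (N * b)) * x = m * l * x ^ 2 / (N * b) by ring,
    div_le_iff₀ (by positivity)]
  calc m * l * x ^ 2 ≤ m * l * b ^ 2 := by gcongr
    _ = m * (l * b) * b := by ring
    _ ≤ n * 2 * b := by gcongr; linarith
    _ ≤ 2 / 5 * (N * b) := by nlinarith

theorem statement_18_general (m n : ℕ) (hmn : m ≤ n) (hn : 3 ≤ n)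
    (γ N l b A B d : ℝ) (ub gb : ℝ → ℝ)
    (hγ : 0 < γ) (hγ' : γ < 1/4)
    (hN : 5 * (n : ℝ) ≤ N)
    (hl : 0 < l) (hb : b ∈ Set.Icc (1/l) (2/l))
    (hA : 0 < A)
    (hd : d ∈ Set.Ioo 0 b) (hld : l * d ∈ Set.Ioo 0 (π/2))
    (heq : d ^ (1 - γ) * Real.cos (l * d) = γ * A)
    (hgpos : ∀ x ∈ Set.Icc d b, 0 < A * x ^ γ + B)
    (hgb : gb = fun x => A * x ^ γ + B)
    (hubpos : ∀ x ∈ Set.Icc d b, 0 < ub x)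
    (hub : ∀ x ∈ Set.Icc d b, HasDerivAt ub ((l * x / (N * b)) * ub x) x) :
    ∀ x ∈ Set.Icc d b,
      (((n : ℝ) - 2) * (1 / (gb x)^2 - (deriv gb x / gb x)^2)
        - deriv (deriv gb) x / gb x
        - (m : ℝ) * (deriv ub x / ub x) * (deriv gb x / gb x) > 0) ∧
      deriv gb x = γ * A * x ^ (γ - 1) ∧
      γ * A * x ^ (γ - 1) ≤ Real.cos (l * d) ∧ Real.cos (l * d) < 1 := by
  subst hgb
  intro x hx
  have hx₀ : 0 < x := hd.1.trans_le hx.1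
  have hn' : (3 : ℝ) ≤ n := by exact_mod_cast hn
  have hlb : l * b ≤ 2 := by have := hb.2; rwa [le_div_iff₀ hl, mul_comm] at this
  have hcos₀ : 0 < cos (l * d) := cos_pos_of_mem_Ioo ⟨by linarith [pi_pos, hld.1], hld.2⟩
  have hcos₁ : cos (l * d) < 1 := by
    simpa using cos_lt_cos_of_nonneg_of_le_pi le_rfl (by linarith [pi_pos, hld.2]) hld.1
  have hslope := mul_rpow_sub_one_le_of_eq hd.1 hx.1 (by linarith) hcos₀.le heq
  have hgrowth := mul_log_deriv_mul_le (Nat.cast_nonneg m) (by exact_mod_cast hmn) hN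
    (by linarith) hl hlb hx₀ hx.2
  refine ⟨?_, deriv_mul_rpow_add_const hx₀, hslope, hcos₁⟩
  rw [deriv_mul_rpow_add_const hx₀, deriv_deriv_mul_rpow_add_const hx₀, (hub x hx).deriv,
    mul_div_cancel_right₀ _ (hubpos x hx).ne']
  refine ricciSphereDir_pos (by linarith) (hgpos x hx) (by positivity) (hslope.trans hcos₁.le) ?_
  exact mul_slope_lt_neg_second_deriv hγ hA hx₀ (by linarith)

/-- positivity of `Ric(Σ,Σ)` on the middle interval `[d,b]` of the pieces
`P_i`: with `ḡ(x) = A x^γ + B` (where `d^{1-γ} cos(l d) = γ A`,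
`B = sin(l d)/l - A d^γ ≤ 0`, `A x^γ + B > 0` on `[d,b]`) and `ū > 0` satisfying
`ū'/ū = l x/(N b)`, one has
`(n-2)(1/ḡ² - (ḡ'/ḡ)²) - ḡ''/ḡ - m (ū'/ū)(ḡ'/ḡ) > 0` on `[d,b]`;
moreover `ḡ'(x) = γ A x^{γ-1} ≤ cos(l d) < 1` on `[d,b]`. -/
theorem statement_18 (m n : ℕ) (hm : 2 ≤ m) (hmn : m ≤ n) (hn : 3 ≤ n)
    (γ N l b A B d : ℝ) (ub gb : ℝ → ℝ)
    (hγ : 0 < γ) (hγ' : γ < 1/4)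
    (hN : 5 * (n : ℝ) ≤ N)
    (hl : 0 < l) (hb : b ∈ Set.Icc (1/l) (2/l))
    (hA : 0 < A)
    (hd : d ∈ Set.Ioo 0 b) (hld : l * d ∈ Set.Ioo 0 (π/2))
    (heq : d ^ (1 - γ) * Real.cos (l * d) = γ * A)
    (hB : B = Real.sin (l * d) / l - A * d ^ γ) (hB' : B ≤ 0)
    (hgpos : ∀ x ∈ Set.Icc d b, 0 < A * x ^ γ + B)
    (hgb : gb = fun x => A * x ^ γ + B)
    (hubpos : ∀ x ∈ Set.Icc d b, 0 < ub x)
    (hub : ∀ x ∈ Set.Icc d b, HasDerivAt ub ((l * x / (N * b)) * ub x) x) :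
    ∀ x ∈ Set.Icc d b,
      (((n : ℝ) - 2) * (1 / (gb x)^2 - (deriv gb x / gb x)^2)
        - deriv (deriv gb) x / gb x
        - (m : ℝ) * (deriv ub x / ub x) * (deriv gb x / gb x) > 0) ∧
      deriv gb x = γ * A * x ^ (γ - 1) ∧
      γ * A * x ^ (γ - 1) ≤ Real.cos (l * d) ∧ Real.cos (l * d) < 1 :=
  statement_18_general m n hmn hn γ N l b A B d ub gb hγ hγ' hN hl hb hA hd hld heq hgpos hgb hubpos
    hub
end
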